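/- arXiv:1504.05045 — 8 statements merged into one kernel-verified Lean document; each statement's English description precedes it below -/
import Mathlib

section
/- Let k ≥ 1 be an integer and let F : ℂ → ℂ be holomorphic on the upper half-plane ℍ = {τ ∈ ℂ : Im τ > 0}. For all τ ∈ ℍ with v = Im τ one has (R_{−2} ∘ R_{−4} ∘ ⋯ ∘ R_{−2k+2} ∘ R_{−2k})(F)(τ) = ∑_{r=0}^{k} (−1)^{k−r} · C(k,r) · ((−2k+r)_{k−r} / (4πv)^{k−r}) · 𝒟^r F(τ), where 𝒟 = (2πi)^{−1} d/dτ is (2πi)^{−1} times the complex derivative and C(k,r) is the binomial coefficient. -/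
open Complex Real Polynomial

/-- The Wirtinger derivative ∂g/∂τ = ½(∂g/∂u − i ∂g/∂v) of a real-differentiable
function `g : ℂ → ℂ`. -/
noncomputable def wirtingerDeriv (g : ℂ → ℂ) (τ : ℂ) : ℂ :=
  (1 / 2) * ((fderiv ℝ g τ) 1 - Complex.I * (fderiv ℝ g τ) Complex.I)

/-- The Maass raising operator of weight `l`:
`(R_l g)(τ) = (1/(2πi)) ∂g/∂τ − (l/(4π Im τ)) g(τ)`. -/
noncomputable def maassRaise (l : ℤ) (g : ℂ → ℂ) : ℂ → ℂ :=
  fun τ => (1 / (2 * (π : ℂ) * Complex.I)) * wirtingerDeriv g τ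
    - ((l : ℂ) / (4 * (π : ℂ) * (τ.im : ℂ))) * g τ

/-- `raiseIter k F j` is `R_{−2(k−j+1)} ∘ ⋯ ∘ R_{−2k+2} ∘ R_{−2k}` applied to `F`;
in particular `raiseIter k F k = (R_{−2} ∘ ⋯ ∘ R_{−2k+2} ∘ R_{−2k})(F)`. -/
noncomputable def raiseIter (k : ℕ) (F : ℂ → ℂ) : ℕ → ℂ → ℂ
  | 0 => F
  | j + 1 => maassRaise (-2 * ((k : ℤ) - (j : ℤ))) (raiseIter k F j)

/-- The operator 𝒟 = (2πi)⁻¹ d/dτ. -/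
noncomputable def DOp (g : ℂ → ℂ) : ℂ → ℂ :=
  fun τ => (1 / (2 * (π : ℂ) * Complex.I)) * deriv g τ

/-!
Write `y = 4π Im τ`. The Wirtinger derivative of `y⁻ⁿ` is `2πi · n · y⁻ⁿ⁻¹`, so for `g`
holomorphic `R_l (y⁻ⁿ g) = y⁻ⁿ 𝒟g + (n - l) y⁻ⁿ⁻¹ g`. By induction on `j`, the `j`-fold
composition `R_{-2(k-j+1)} ∘ ⋯ ∘ R_{-2k}` applied to `F` is `∑_r a_{j,r} y^{r-j} 𝒟^r F`, where
`a_{j+1,r+1} = a_{j,r} + (2k - j - r - 1) a_{j,r+1}`. This Pascal-type recurrence is solved by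
`a_{j,r} = (-1)^{j-r} C(j,r) (-2k+r)_{j-r}`: it reduces to Pascal's rule together with
`(n+1) C(n,r+1) = (n-r) C(n+1,r+1)`.
-/

open Topology

section Wirtinger

variable {f g : ℂ → ℂ} {τ : ℂ}

theorem wirtingerDeriv_congr (h : f =ᶠ[𝓝 τ] g) :
    wirtingerDeriv f τ = wirtingerDeriv g τ := by
  simp only [wirtingerDeriv, h.fderiv_eq]

theorem DifferentiableAt.wirtingerDeriv_eq_deriv (h : DifferentiableAt ℂ f τ) :
    wirtingerDeriv f τ = deriv f τ := by
  rw [wirtingerDeriv, (h.hasFDerivAt.restrictScalars ℝ).fderiv]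
  simp only [ContinuousLinearMap.coe_restrictScalars', fderiv_eq_smul_deriv, smul_eq_mul,
    ← mul_assoc, I_mul_I]
  ring

theorem wirtingerDeriv_mul (hf : DifferentiableAt ℝ f τ) (hg : DifferentiableAt ℝ g τ) :
    wirtingerDeriv (fun z => f z * g z) τ =
      wirtingerDeriv f τ * g τ + f τ * wirtingerDeriv g τ := by
  simp only [wirtingerDeriv, fderiv_fun_mul hf hg, add_apply, smul_apply, smul_eq_mul]
  ring

theorem wirtingerDeriv_const_mul (c : ℂ) (hf : DifferentiableAt ℝ f τ) :
    wirtingerDeriv (fun z => c * f z) τ = c * wirtingerDeriv f τ := by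
  simp only [wirtingerDeriv, fderiv_const_mul hf, smul_apply, smul_eq_mul]
  ring

theorem wirtingerDeriv_sum {ι : Type*} {s : Finset ι} {f : ι → ℂ → ℂ}
    (hf : ∀ i ∈ s, DifferentiableAt ℝ (f i) τ) :
    wirtingerDeriv (fun z => ∑ i ∈ s, f i z) τ = ∑ i ∈ s, wirtingerDeriv (f i) τ := by
  simp only [wirtingerDeriv, fderiv_fun_sum hf, sum_apply, Finset.mul_sum,
    ← Finset.sum_sub_distrib]

theorem HasDerivAt.wirtingerDeriv_comp_im {h : ℝ → ℂ} {h' : ℂ}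
    (hh : HasDerivAt h h' τ.im) :
    wirtingerDeriv (fun z => h z.im) τ = -(I / 2) * h' := by
  have : HasFDerivAt (fun z => h z.im) _ τ := hh.hasFDerivAt.comp τ imCLM.hasFDerivAt
  rw [wirtingerDeriv, this.fderiv]
  simp only [ContinuousLinearMap.comp_apply, imCLM_apply, one_im, I_im,
    ContinuousLinearMap.toSpanSingleton_apply, zero_smul, one_smul]
  ring

end Wirtinger

noncomputable def invFourPiImPow (n : ℕ) (z : ℂ) : ℂ :=
  ((4 * (π : ℂ) * (z.im : ℂ)) ^ n)⁻¹

theorem hasDerivAt_inv_pow_four_pi_mul (n : ℕ) {v : ℝ} (hv : v ≠ 0) :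
    HasDerivAt (fun v : ℝ => ((4 * (π : ℂ) * (v : ℂ)) ^ n)⁻¹)
      (-(4 * π * n) * ((4 * (π : ℂ) * (v : ℂ)) ^ (n + 1))⁻¹) v := by
  have h4v : 4 * (π : ℂ) * (v : ℂ) ≠ 0 := by simp [hv, Real.pi_ne_zero]
  have hz := ((hasDerivAt_zpow (-(n : ℤ)) _ (Or.inl h4v)).comp (v : ℂ)
    ((hasDerivAt_id (v : ℂ)).const_mul (4 * (π : ℂ)))).comp_ofReal
  convert hz using 1
  · ext w
    simp [zpow_neg]
  · rw [show -(n : ℤ) - 1 = -((n + 1 : ℕ) : ℤ) by push_cast; ring, zpow_neg, zpow_natCast]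
    push_cast
    ring

theorem differentiableAt_invFourPiImPow (n : ℕ) {τ : ℂ} (hτ : τ.im ≠ 0) :
    DifferentiableAt ℝ (invFourPiImPow n) τ :=
  (hasDerivAt_inv_pow_four_pi_mul n hτ).differentiableAt.comp τ imCLM.differentiableAt

theorem wirtingerDeriv_invFourPiImPow (n : ℕ) {τ : ℂ} (hτ : τ.im ≠ 0) :
    wirtingerDeriv (invFourPiImPow n) τ = 2 * π * I * n * invFourPiImPow (n + 1) τ :=
  (hasDerivAt_inv_pow_four_pi_mul n hτ).wirtingerDeriv_comp_im.trans <| by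
    rw [invFourPiImPow]
    ring

section MaassRaise

variable {l : ℤ} {f g : ℂ → ℂ} {τ : ℂ}

theorem maassRaise_congr (h : f =ᶠ[𝓝 τ] g) : maassRaise l f τ = maassRaise l g τ := by
  simp only [maassRaise, wirtingerDeriv_congr h, h.eq_of_nhds]

theorem maassRaise_const_mul (c : ℂ) (hf : DifferentiableAt ℝ f τ) :
    maassRaise l (fun z => c * f z) τ = c * maassRaise l f τ := by
  simp only [maassRaise, wirtingerDeriv_const_mul c hf]
  ring

theorem maassRaise_sum {ι : Type*} {s : Finset ι} {f : ι → ℂ → ℂ}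
    (hf : ∀ i ∈ s, DifferentiableAt ℝ (f i) τ) :
    maassRaise l (fun z => ∑ i ∈ s, f i z) τ = ∑ i ∈ s, maassRaise l (f i) τ := by
  simp only [maassRaise, wirtingerDeriv_sum hf, Finset.mul_sum, ← Finset.sum_sub_distrib]

theorem maassRaise_invFourPiImPow_mul (n : ℕ) (hg : DifferentiableAt ℂ g τ)
    (hτ : τ.im ≠ 0) :
    maassRaise l (fun z => invFourPiImPow n z * g z) τ =
      invFourPiImPow n τ * DOp g τ + (n - l) * invFourPiImPow (n + 1) τ * g τ := by
  rw [maassRaise,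
    wirtingerDeriv_mul (differentiableAt_invFourPiImPow n hτ) (hg.restrictScalars ℝ),
    wirtingerDeriv_invFourPiImPow n hτ, hg.wirtingerDeriv_eq_deriv]
  simp only [DOp, invFourPiImPow, pow_succ, mul_inv]
  field_simp
  ring

end MaassRaise

theorem DifferentiableOn.iterate_DOp {F : ℂ → ℂ} {U : Set ℂ} (hF : DifferentiableOn ℂ F U)
    (hU : IsOpen U) (r : ℕ) : DifferentiableOn ℂ (DOp^[r] F) U := by
  induction r with
  | zero => exact hF
  | succ r ih =>
    rw [Function.iterate_succ_apply']
    exact (ih.deriv hU).const_mul _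

theorem ascPochhammer_succ_eval_left {S : Type*} [CommSemiring S] (n : ℕ) (x : S) :
    (ascPochhammer S (n + 1)).eval x = x * (ascPochhammer S n).eval (x + 1) := by
  simp [ascPochhammer_succ_left, eval_comp]

noncomputable def raiseCoeff (k j r : ℕ) : ℂ :=
  (-1) ^ (j - r) * j.choose r * (ascPochhammer ℂ (j - r)).eval (-2 * (k : ℂ) + r)

section RaiseCoeff

variable (k j : ℕ)

theorem raiseCoeff_succ_zero : raiseCoeff k (j + 1) 0 = (2 * k - j) * raiseCoeff k j 0 := by
  simp only [raiseCoeff, Nat.sub_zero, Nat.choose_zero_right, ascPochhammer_succ_eval]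
  push_cast
  ring

theorem raiseCoeff_succ_succ {r : ℕ} (hr : r ≤ j) :
    raiseCoeff k (j + 1) (r + 1) =
      raiseCoeff k j r + (2 * k - j - (r + 1)) * raiseCoeff k j (r + 1) := by
  obtain rfl | hrj := hr.eq_or_lt
  · simp [raiseCoeff, Nat.choose_succ_self]
  obtain ⟨m, rfl⟩ : ∃ m, j = r + m + 1 := ⟨j - r - 1, by omega⟩
  have pascal : ((r + m + 1 + 1).choose (r + 1) : ℂ) =
      (r + m + 1).choose r + (r + m + 1).choose (r + 1) := by
    exact_mod_cast Nat.choose_succ_succ' (r + m + 1) r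
  have absorb : ((r + m + 1).choose (r + 1) : ℂ) * (r + m + 2) =
      (r + m + 1 + 1).choose (r + 1) * (m + 1) := by
    have := Nat.choose_mul_succ_eq (r + m + 1) (r + 1)
    rw [show r + m + 1 + 1 - (r + 1) = m + 1 by omega] at this
    exact_mod_cast this
  simp only [raiseCoeff, show r + m + 1 + 1 - (r + 1) = m + 1 by omega,
    show r + m + 1 - r = m + 1 by omega, show r + m + 1 - (r + 1) = m by omega]
  rw [ascPochhammer_succ_eval _ (-2 * (k : ℂ) + ((r + 1 : ℕ) : ℂ)),
    ascPochhammer_succ_eval_left _ (-2 * (k : ℂ) + (r : ℂ))]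
  push_cast
  rw [show -2 * (k : ℂ) + r + 1 = -2 * k + (r + 1) by ring]
  set P := (ascPochhammer ℂ m).eval (-2 * (k : ℂ) + (r + 1))
  linear_combination (-(-1) ^ m * P * (-2 * k + r)) * pascal + ((-1) ^ m * P) * absorb

end RaiseCoeff

theorem sum_raiseCoeff_succ_mul (k j : ℕ) (X : ℕ → ℂ) :
    ∑ r ∈ Finset.range (j + 2), raiseCoeff k (j + 1) r * X r =
      ∑ r ∈ Finset.range (j + 1),
        (raiseCoeff k j r * X (r + 1) + (2 * k - j - r) * raiseCoeff k j r * X r) := by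
  have hlast : raiseCoeff k j (j + 1) = 0 := by simp [raiseCoeff, Nat.choose_succ_self]
  calc ∑ r ∈ Finset.range (j + 2), raiseCoeff k (j + 1) r * X r
      = ∑ r ∈ Finset.range (j + 1), (raiseCoeff k j r * X (r + 1)
          + (2 * k - j - (r + 1 : ℕ)) * raiseCoeff k j (r + 1) * X (r + 1))
        + (2 * k - j - (0 : ℕ)) * raiseCoeff k j 0 * X 0 := by
        rw [Finset.sum_range_succ', raiseCoeff_succ_zero]
        congr 1
        · refine Finset.sum_congr rfl fun r hr => ?_
          rw [raiseCoeff_succ_succ k j (Finset.mem_range_succ_iff.1 hr)]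
          push_cast
          ring
        · simp
    _ = ∑ r ∈ Finset.range (j + 1), raiseCoeff k j r * X (r + 1)
        + ∑ r ∈ Finset.range (j + 2), (2 * k - j - r) * raiseCoeff k j r * X r := by
        rw [Finset.sum_add_distrib, add_assoc,
          Finset.sum_range_succ' (fun r : ℕ => (2 * (k : ℂ) - j - r) * raiseCoeff k j r * X r)]
    _ = _ := by
        rw [Finset.sum_range_succ _ (j + 1), hlast, Finset.sum_add_distrib]
        simp

theorem raiseIter_eqOn (k : ℕ) {F : ℂ → ℂ}
    (hF : DifferentiableOn ℂ F {z : ℂ | 0 < z.im}) (j : ℕ) :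
    Set.EqOn (raiseIter k F j)
      (fun z => ∑ r ∈ Finset.range (j + 1),
        raiseCoeff k j r * (invFourPiImPow (j - r) z * DOp^[r] F z)) {z : ℂ | 0 < z.im} := by
  have hU : IsOpen {z : ℂ | 0 < z.im} := isOpen_lt continuous_const continuous_im
  induction j with
  | zero =>
    intro τ _
    simp [raiseIter, raiseCoeff, invFourPiImPow]
  | succ j ih =>
    intro τ (hτ : 0 < τ.im)
    have hD : ∀ r, DifferentiableAt ℂ (DOp^[r] F) τ :=
      fun r => (hF.iterate_DOp hU r).differentiableAt (hU.mem_nhds hτ)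
    have hterm : ∀ r, DifferentiableAt ℝ (fun z => invFourPiImPow (j - r) z * DOp^[r] F z) τ :=
      fun r => (differentiableAt_invFourPiImPow _ hτ.ne').mul ((hD r).restrictScalars ℝ)
    calc raiseIter k F (j + 1) τ
        = ∑ r ∈ Finset.range (j + 1), raiseCoeff k j r * maassRaise (-2 * ((k : ℤ) - j))
            (fun z => invFourPiImPow (j - r) z * DOp^[r] F z) τ := by
          rw [raiseIter, maassRaise_congr (ih.eventuallyEq_of_mem (hU.mem_nhds hτ)),
            maassRaise_sum fun r _ => (hterm r).const_mul _]
          exact Finset.sum_congr rfl fun r _ => maassRaise_const_mul _ (hterm r)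
      _ = ∑ r ∈ Finset.range (j + 1),
            (raiseCoeff k j r * (invFourPiImPow (j + 1 - (r + 1)) τ * DOp^[r + 1] F τ)
              + (2 * k - j - r) * raiseCoeff k j r *
                (invFourPiImPow (j + 1 - r) τ * DOp^[r] F τ)) := by
          refine Finset.sum_congr rfl fun r hr => ?_
          have hrj := Finset.mem_range_succ_iff.1 hr
          rw [maassRaise_invFourPiImPow_mul _ (hD r) hτ.ne', Function.iterate_succ_apply',
            Nat.add_sub_add_right, show j + 1 - r = j - r + 1 by omega]
          push_cast [hrj]
          ring
      _ = _ := (sum_raiseCoeff_succ_mul k j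
            fun r => invFourPiImPow (j + 1 - r) τ * DOp^[r] F τ).symm

theorem stmt0_general (k : ℕ) (F : ℂ → ℂ)
    (hF : DifferentiableOn ℂ F {z : ℂ | 0 < z.im}) (τ : ℂ) (hτ : 0 < τ.im) :
    raiseIter k F k τ =
      ∑ r ∈ Finset.range (k + 1),
        (-1 : ℂ) ^ (k - r) * (k.choose r : ℂ) *
          ((ascPochhammer ℂ (k - r)).eval (-2 * (k : ℂ) + (r : ℂ)) /
            (4 * (π : ℂ) * (τ.im : ℂ)) ^ (k - r)) *
          (DOp^[r] F τ) := by
  rw [raiseIter_eqOn k hF k hτ]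
  refine Finset.sum_congr rfl fun r _ => ?_
  rw [raiseCoeff, invFourPiImPow, div_eq_mul_inv]
  ring

theorem stmt0 (k : ℕ) (hk : 1 ≤ k) (F : ℂ → ℂ)
    (hF : DifferentiableOn ℂ F {z : ℂ | 0 < z.im}) (τ : ℂ) (hτ : 0 < τ.im) :
    raiseIter k F k τ =
      ∑ r ∈ Finset.range (k + 1),
        (-1 : ℂ) ^ (k - r) * (k.choose r : ℂ) *
          ((ascPochhammer ℂ (k - r)).eval (-2 * (k : ℂ) + (r : ℂ)) /
            (4 * (π : ℂ) * (τ.im : ℂ)) ^ (k - r)) *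
          (DOp^[r] F τ) :=
  stmt0_general k F hF τ hτ
end

section
/- For every real number n ≥ 1, the series ∑_{l=1}^{∞} e^{4π√(nl) − √3·π·l} converges and satisfies ∑_{l=1}^{∞} e^{4π√(nl) − √3·π·l} ≤ ∫_{1}^{∞} e^{4π√(nμ) − √3·π·μ} dμ + e^{4πn/√3}. -/
/-!
The summand is `f μ = exp (b √μ - a μ)` with `b = 4π√n`, `a = √3π`; completing the square in `√μ`
shows that `f` increases up to `μ₀ = (b / 2a)² = 4n/3`, decreases afterwards, and is at most
`exp (b² / 4a) = exp (4πn/√3)`. For such a unimodal `f ≥ 0`, each lattice term left of the peak is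
bounded by the integral over the unit interval to its right, each term right of the peak by the
integral over the unit interval to its left, and of the two terms straddling the peak the smaller
is bounded by the integral between them and the larger by `max f`.
-/

open Real MeasureTheory Set

section Unimodal

variable {f : ℝ → ℝ} {a c : ℝ}

lemma min_le_of_monotoneOn_of_antitoneOn (hmono : MonotoneOn f (Icc a c))
    (hanti : AntitoneOn f (Ici c)) {x y t : ℝ} (hx : a ≤ x) (ht : t ∈ Icc x y) :
    min (f x) (f y) ≤ f t := by
  rcases le_total t c with htc | hct
  · exact (min_le_left _ _).trans <| hmono ⟨hx, ht.1.trans htc⟩ ⟨hx.trans ht.1, htc⟩ ht.1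
  · exact (min_le_right _ _).trans <| hanti hct (hct.trans ht.2) ht.2

lemma intervalIntegral_le_setIntegral_Ici (hf : IntegrableOn f (Ici a))
    (hf0 : ∀ x ∈ Ici a, 0 ≤ f x) {b : ℝ} (hab : a ≤ b) :
    ∫ x in a..b, f x ≤ ∫ x in Ici a, f x := by
  rw [intervalIntegral.integral_of_le hab]
  exact setIntegral_mono_set hf ((ae_restrict_mem measurableSet_Ici).mono hf0)
    (Ioc_subset_Ioi_self.trans Ioi_subset_Ici_self).eventuallyLE

lemma sum_range_le_integral_add_of_unimodal (hac : a ≤ c) (hmono : MonotoneOn f (Icc a c))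
    (hanti : AntitoneOn f (Ici c)) (hf : IntegrableOn f (Ici a))
    (hf0 : ∀ x ∈ Ici a, 0 ≤ f x) {M : ℝ} (hM : ∀ x ∈ Ici a, f x ≤ M) (N : ℕ) :
    ∑ k ∈ Finset.range N, f (a + k) ≤ (∫ x in Ici a, f x) + M := by
  set m := ⌊c - a⌋₊
  have hm : a + m ≤ c := by linarith [Nat.floor_le (sub_nonneg.2 hac)]
  have hm' : c < a + m + 1 := by linarith [Nat.lt_floor_add_one (c - a)]
  have hint : ∀ u v, a ≤ u → a ≤ v → IntervalIntegrable f volume u v := fun u v hu hv =>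
    (hf.mono_set fun x hx => (le_min hu hv).trans hx.1).intervalIntegrable
  have ham : a ≤ a + m := le_add_of_nonneg_right m.cast_nonneg
  have head : ∑ k ∈ Finset.range m, f (a + k) ≤ ∫ x in a..a + m, f x :=
    (hmono.mono (Icc_subset_Icc_right hm)).sum_le_integral
  have peak : f (a + m) + f (a + m + 1) ≤ (∫ x in a + m..a + m + 1, f x) + M := by
    have hmin : min (f (a + m)) (f (a + m + 1)) ≤ ∫ x in a + m..a + m + 1, f x := by
      calc min (f (a + m)) (f (a + m + 1))
          = ∫ _ in a + m..a + m + 1, min (f (a + m)) (f (a + m + 1)) := by simp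
        _ ≤ ∫ x in a + m..a + m + 1, f x :=
          intervalIntegral.integral_mono_on (by linarith) intervalIntegrable_const
            (hint _ _ ham (by linarith))
            fun t ht => min_le_of_monotoneOn_of_antitoneOn hmono hanti ham ht
    have hmax : max (f (a + m)) (f (a + m + 1)) ≤ M :=
      max_le (hM _ ham) (hM _ (by simp only [mem_Ici]; linarith))
    linarith [min_add_max (f (a + m)) (f (a + m + 1))]
  have tail : ∑ i ∈ Finset.range N, f (a + m + 1 + (i + 1 : ℕ)) ≤
      ∫ x in a + m + 1..a + m + 1 + N, f x :=
    (hanti.mono fun x hx => hm'.le.trans hx.1).sum_le_integral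
  have nonneg (k : ℕ) : 0 ≤ f (a + k) := hf0 _ (mem_Ici.2 (le_add_of_nonneg_right k.cast_nonneg))
  calc ∑ k ∈ Finset.range N, f (a + k)
      ≤ ∑ k ∈ Finset.range (m + 2 + N), f (a + k) :=
        Finset.sum_le_sum_of_subset_of_nonneg (Finset.range_subset_range.2 (by omega))
          fun k _ _ => nonneg k
    _ = ∑ k ∈ Finset.range m, f (a + k) + (f (a + m) + f (a + m + 1)) +
          ∑ i ∈ Finset.range N, f (a + m + 1 + (i + 1 : ℕ)) := by
        rw [Finset.sum_range_add, Finset.sum_range_succ, Finset.sum_range_succ, add_assoc]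
        push_cast
        ring_nf
    _ ≤ (∫ x in a..a + m, f x) + ((∫ x in a + m..a + m + 1, f x) + M) +
          ∫ x in a + m + 1..a + m + 1 + N, f x := by gcongr
    _ = (∫ x in a..a + m + 1 + N, f x) + M := by
        rw [← intervalIntegral.integral_add_adjacent_intervals
            (hint a (a + m + 1) le_rfl (by linarith))
            (hint _ (a + m + 1 + N) (by linarith) (by linarith)),
          ← intervalIntegral.integral_add_adjacent_intervals (hint a (a + m) le_rfl ham)
            (hint _ (a + m + 1) ham (by linarith))]
        ring
    _ ≤ (∫ x in Ici a, f x) + M := by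
        gcongr
        exact intervalIntegral_le_setIntegral_Ici hf hf0
          (by linarith [(N.cast_nonneg : (0 : ℝ) ≤ N)])

theorem summable_and_tsum_le_integral_add_of_unimodal (hac : a ≤ c)
    (hmono : MonotoneOn f (Icc a c)) (hanti : AntitoneOn f (Ici c)) (hf : IntegrableOn f (Ici a))
    (hf0 : ∀ x ∈ Ici a, 0 ≤ f x) {M : ℝ} (hM : ∀ x ∈ Ici a, f x ≤ M) :
    Summable (fun k : ℕ => f (k + a)) ∧ ∑' k : ℕ, f (k + a) ≤ (∫ x in Ici a, f x) + M := by
  simp_rw [add_comm _ a]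
  have nonneg (k : ℕ) : 0 ≤ f (a + k) := hf0 _ (mem_Ici.2 (le_add_of_nonneg_right k.cast_nonneg))
  have bound := sum_range_le_integral_add_of_unimodal hac hmono hanti hf hf0 hM
  exact ⟨summable_of_sum_range_le nonneg bound, Real.tsum_le_of_sum_range_le nonneg bound⟩

end Unimodal

section SqrtExp

lemma mul_sqrt_sub_mul_le {a : ℝ} (b : ℝ) (ha : 0 < a) {x : ℝ} (hx : 0 ≤ x) :
    b * √x - a * x ≤ b ^ 2 / (4 * a) := by
  rw [le_div_iff₀ (by positivity)]
  have h : (b * √x - a * x) * (4 * a) = b ^ 2 - (2 * a * √x - b) ^ 2 := by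
    linear_combination 4 * a ^ 2 * sq_sqrt hx
  linarith [sq_nonneg (2 * a * √x - b)]

lemma mul_sqrt_sub_mul_sub_eq (a b : ℝ) {x y : ℝ} (hx : 0 ≤ x) (hy : 0 ≤ y) :
    (b * √y - a * y) - (b * √x - a * x) = (√y - √x) * (b - a * (√x + √y)) := by
  linear_combination a * sq_sqrt hy - a * sq_sqrt hx

lemma monotoneOn_exp_mul_sqrt_sub_mul {a b : ℝ} (ha : 0 < a) (hb : 0 ≤ b) :
    MonotoneOn (fun x => exp (b * √x - a * x)) (Icc 0 ((b / (2 * a)) ^ 2)) := by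
  refine exp_monotone.comp_monotoneOn fun x hx y hy hxy => sub_nonneg.1 ?_
  have hy' : √y * (2 * a) ≤ b := by
    rw [← le_div_iff₀ (by positivity), ← sqrt_sq (div_nonneg hb (by positivity))]
    exact sqrt_le_sqrt hy.2
  have hsxy := sqrt_le_sqrt hxy
  rw [mul_sqrt_sub_mul_sub_eq a b hx.1 hy.1]
  exact mul_nonneg (sub_nonneg.2 hsxy) (by nlinarith)

lemma antitoneOn_exp_mul_sqrt_sub_mul {a b : ℝ} (ha : 0 < a) :
    AntitoneOn (fun x => exp (b * √x - a * x)) (Ici ((b / (2 * a)) ^ 2)) := by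
  refine exp_monotone.comp_antitoneOn fun x hx y hy hxy => sub_nonneg.1 ?_
  have hx' : b ≤ √x * (2 * a) := by
    rw [← div_le_iff₀ (by positivity)]
    exact (le_abs_self _).trans ((sqrt_sq_eq_abs _).symm.le.trans (sqrt_le_sqrt hx))
  have hsxy := sqrt_le_sqrt hxy
  have hx0 : 0 ≤ x := (sq_nonneg _).trans hx
  have hpeak : b - a * (√x + √y) ≤ 0 := by nlinarith
  linarith [mul_sqrt_sub_mul_sub_eq a b hx0 (hx0.trans hxy),
    mul_nonpos_of_nonneg_of_nonpos (sub_nonneg.2 hsxy) hpeak]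

lemma exp_mul_sqrt_sub_mul_le {a : ℝ} (b : ℝ) (ha : 0 < a) {x : ℝ} (hx : 0 ≤ x) :
    exp (b * √x - a * x) ≤ exp (b ^ 2 / (4 * a)) :=
  exp_le_exp.2 (mul_sqrt_sub_mul_le b ha hx)

lemma integrableOn_exp_mul_sqrt_sub_mul {a : ℝ} (b : ℝ) (ha : 0 < a) :
    IntegrableOn (fun x => exp (b * √x - a * x)) (Ici 0) := by
  rw [integrableOn_Ici_iff_integrableOn_Ioi]
  refine Integrable.mono' ((exp_neg_integrableOn_Ioi 0 (half_pos ha)).const_mul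
    (exp (b ^ 2 / (4 * (a / 2))))) (by fun_prop) ?_
  filter_upwards [ae_restrict_mem measurableSet_Ioi] with x hx
  rw [norm_of_nonneg (exp_pos _).le, ← exp_add]
  exact exp_le_exp.2 (by linarith [mul_sqrt_sub_mul_le b (half_pos ha) (le_of_lt hx)])

end SqrtExp

theorem stmt1 (n : ℝ) (hn : 1 ≤ n) :
    Summable (fun l : ℕ =>
      Real.exp (4 * π * Real.sqrt (n * (l + 1)) - Real.sqrt 3 * π * (l + 1))) ∧
    ∑' l : ℕ, Real.exp (4 * π * Real.sqrt (n * (l + 1)) - Real.sqrt 3 * π * (l + 1)) ≤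
      (∫ μ in Set.Ici (1 : ℝ), Real.exp (4 * π * Real.sqrt (n * μ) - Real.sqrt 3 * π * μ)) +
        Real.exp (4 * π * n / Real.sqrt 3) := by
  have hn0 : 0 ≤ n := by linarith
  have ha : 0 < √3 * π := by positivity
  have hpeak : (4 * π * √n / (2 * (√3 * π))) ^ 2 = 4 * n / 3 := by
    field_simp
    rw [sq_sqrt hn0, sq_sqrt (by norm_num : (0 : ℝ) ≤ 3)]
    ring
  have hmax : (4 * π * √n) ^ 2 / (4 * (√3 * π)) = 4 * π * n / √3 := by
    field_simp
    rw [sq_sqrt hn0]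
  simp only [sqrt_mul hn0, ← mul_assoc (4 * π), ← hmax]
  exact summable_and_tsum_le_integral_add_of_unimodal (by rw [hpeak]; linarith)
    ((monotoneOn_exp_mul_sqrt_sub_mul ha (by positivity)).mono (Icc_subset_Icc_left zero_le_one))
    (antitoneOn_exp_mul_sqrt_sub_mul ha)
    ((integrableOn_exp_mul_sqrt_sub_mul _ ha).mono_set (Ici_subset_Ici.2 zero_le_one))
    (fun _ _ => (exp_pos _).le) (fun _ hx => exp_mul_sqrt_sub_mul_le _ ha (zero_le_one.trans hx))
end

section
/- For every real number n ≥ 1, ∫_{1}^{∞} e^{4π√(nμ) − √3·π·μ} dμ ≤ (4√n / 3^{3/4}) · e^{4πn/√3} + e^{4π√n − √3·π} / (√3·π). -/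
/-!
Substituting `μ = t²` turns the integral into `∫_{t ≥ 1} 2t e^{bt - at²}` with `a = √3 π` and
`b = 4π√n`. Completing the square, `bt - at² = b²/(4a) - a(t - c)²` with `c = b/(2a)`. Splitting
`t = (t - c) + c`, the first part has the explicit primitive `-e^{-a(t-c)²}/(2a)` and gives
`e^{b-a}/(2a)`; the second is at most `c` times the full Gaussian integral `√(π/a)`.
-/

open Real MeasureTheory Set Filter Topology

lemma image_sq_Ici {s : ℝ} (hs : 0 ≤ s) : (fun t : ℝ => t ^ 2) '' Ici s = Ici (s ^ 2) := by
  ext x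
  constructor
  · rintro ⟨t, ht, rfl⟩
    exact pow_le_pow_left₀ hs ht 2
  · intro hx
    refine ⟨√x, ?_, sq_sqrt ((sq_nonneg s).trans hx)⟩
    calc s = √(s ^ 2) := (sqrt_sq hs).symm
      _ ≤ √x := sqrt_le_sqrt hx

theorem integral_Ici_sq_eq_integral_comp_sq {E : Type*} [NormedAddCommGroup E] [NormedSpace ℝ E]
    (f : ℝ → E) {s : ℝ} (hs : 0 ≤ s) :
    ∫ x in Ici (s ^ 2), f x = ∫ t in Ici s, (2 * t) • f (t ^ 2) := by
  have hinj : InjOn (fun t : ℝ => t ^ 2) (Ici s) := fun x hx y hy h =>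
    (sq_eq_sq₀ (hs.trans hx) (hs.trans hy)).1 h
  rw [← image_sq_Ici hs, integral_image_eq_integral_abs_deriv_smul measurableSet_Ici
    (fun t _ => by simpa using (hasDerivAt_pow 2 t).hasDerivWithinAt) hinj f]
  refine setIntegral_congr_fun measurableSet_Ici fun t ht => ?_
  have ht0 : 0 ≤ t := hs.trans ht
  rw [abs_of_nonneg (by positivity)]

theorem integral_Ici_sub_mul_exp_neg_mul_sq_sub {a : ℝ} (ha : 0 < a) (c s : ℝ) :
    ∫ t in Ici s, (t - c) * exp (-a * (t - c) ^ 2) = exp (-a * (s - c) ^ 2) / (2 * a) := by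
  have hderiv (t : ℝ) : HasDerivAt (fun t => -exp (-a * (t - c) ^ 2) / (2 * a))
      ((t - c) * exp (-a * (t - c) ^ 2)) t := by
    refine (((((hasDerivAt_id' t).sub_const c).fun_pow 2).const_mul (-a)).exp.fun_neg.div_const
      (2 * a)).congr_deriv ?_
    field_simp
    ring
  have hlim : Tendsto (fun t => -exp (-a * (t - c) ^ 2) / (2 * a)) atTop (𝓝 0) := by
    have hsq : Tendsto (fun t : ℝ => -a * (t - c) ^ 2) atTop atBot :=
      ((tendsto_pow_atTop two_ne_zero).comp (tendsto_atTop_add_const_right _ (-c) tendsto_id)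
        ).const_mul_atTop_of_neg (neg_lt_zero.2 ha)
    simpa using ((tendsto_exp_atBot.comp hsq).neg).div_const (2 * a)
  rw [integral_Ici_eq_integral_Ioi, integral_Ioi_of_hasDerivAt_of_tendsto' (fun t _ => hderiv t)
    ((integrable_mul_exp_neg_mul_sq ha).comp_sub_right c).integrableOn hlim]
  ring

theorem setIntegral_exp_neg_mul_sq_sub_le {a : ℝ} (ha : 0 < a) (c : ℝ) (S : Set ℝ) :
    ∫ t in S, exp (-a * (t - c) ^ 2) ≤ √(π / a) :=
  calc ∫ t in S, exp (-a * (t - c) ^ 2)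
      ≤ ∫ t, exp (-a * (t - c) ^ 2) :=
        setIntegral_le_integral ((integrable_exp_neg_mul_sq ha).comp_sub_right c)
          (Eventually.of_forall fun _ => (exp_pos _).le)
    _ = √(π / a) := by
        rw [integral_sub_right_eq_self (fun t => exp (-a * t ^ 2)) c, integral_gaussian]

theorem integral_Ici_mul_exp_neg_mul_sq_sub_le {a c : ℝ} (ha : 0 < a) (hc : 0 ≤ c) (s : ℝ) :
    ∫ t in Ici s, t * exp (-a * (t - c) ^ 2) ≤
      exp (-a * (s - c) ^ 2) / (2 * a) + c * √(π / a) := by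
  have hsplit (t : ℝ) : t * exp (-a * (t - c) ^ 2) =
      (t - c) * exp (-a * (t - c) ^ 2) + c * exp (-a * (t - c) ^ 2) := by ring
  simp_rw [hsplit]
  rw [integral_add ((integrable_mul_exp_neg_mul_sq ha).comp_sub_right c).integrableOn
    (((integrable_exp_neg_mul_sq ha).comp_sub_right c).integrableOn.const_mul c),
    integral_const_mul, integral_Ici_sub_mul_exp_neg_mul_sq_sub ha]
  gcongr
  exact setIntegral_exp_neg_mul_sq_sub_le ha c _

theorem integral_Ici_mul_exp_mul_sub_mul_sq_le {a b : ℝ} (ha : 0 < a) (hb : 0 ≤ b) (s : ℝ) :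
    ∫ t in Ici s, t * exp (b * t - a * t ^ 2) ≤
      exp (b * s - a * s ^ 2) / (2 * a) + b / (2 * a) * √(π / a) * exp (b ^ 2 / (4 * a)) := by
  set c := b / (2 * a) with hc
  have hsquare (t : ℝ) :
      exp (b * t - a * t ^ 2) = exp (b ^ 2 / (4 * a)) * exp (-a * (t - c) ^ 2) := by
    rw [← exp_add]
    congr 1
    rw [hc]
    field_simp
    ring
  simp_rw [hsquare, mul_left_comm _ (exp (b ^ 2 / (4 * a)))]
  rw [integral_const_mul]
  calc exp (b ^ 2 / (4 * a)) * ∫ t in Ici s, t * exp (-a * (t - c) ^ 2)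
      ≤ exp (b ^ 2 / (4 * a)) * (exp (-a * (s - c) ^ 2) / (2 * a) + c * √(π / a)) := by
        gcongr
        exact integral_Ici_mul_exp_neg_mul_sq_sub_le ha (by positivity) s
    _ = _ := by ring

lemma rpow_three_div_four_eq_sqrt_mul_sqrt_sqrt {x : ℝ} (hx : 0 ≤ x) :
    x ^ ((3 : ℝ) / 4) = √x * √√x := by
  rw [sqrt_eq_rpow, sqrt_eq_rpow, ← rpow_mul hx, ← rpow_add' hx] <;> norm_num

theorem stmt2 (n : ℝ) (hn : 1 ≤ n) :
    (∫ μ in Set.Ici (1 : ℝ), Real.exp (4 * π * Real.sqrt (n * μ) - Real.sqrt 3 * π * μ)) ≤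
      4 * Real.sqrt n / (3 : ℝ) ^ ((3 : ℝ) / 4) * Real.exp (4 * π * n / Real.sqrt 3) +
        Real.exp (4 * π * Real.sqrt n - Real.sqrt 3 * π) / (Real.sqrt 3 * π) := by
  have hn0 : 0 ≤ n := zero_le_one.trans hn
  set a := √3 * π with ha_def
  set b := 4 * π * √n with hb_def
  have hsubst : ∫ μ in Ici (1 : ℝ), exp (4 * π * √(n * μ) - a * μ) =
      2 * ∫ t in Ici (1 : ℝ), t * exp (b * t - a * t ^ 2) := by
    rw [← integral_const_mul, ← one_pow 2,
      integral_Ici_sq_eq_integral_comp_sq _ zero_le_one, one_pow]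
    refine setIntegral_congr_fun measurableSet_Ici fun t ht => ?_
    rw [sqrt_mul hn0, sqrt_sq (zero_le_one.trans ht), smul_eq_mul, hb_def]
    ring_nf
  have hpa : √(π / a) = (√√3)⁻¹ := by
    rw [ha_def, div_mul_cancel_right₀ pi_pos.ne', sqrt_inv]
  calc _ = 2 * ∫ t in Ici (1 : ℝ), t * exp (b * t - a * t ^ 2) := hsubst
    _ ≤ 2 * (exp (b * 1 - a * 1 ^ 2) / (2 * a) +
          b / (2 * a) * √(π / a) * exp (b ^ 2 / (4 * a))) := by
        gcongr
        exact integral_Ici_mul_exp_mul_sub_mul_sq_le (by positivity) (by positivity) 1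
    _ = _ := by
        rw [hpa, rpow_three_div_four_eq_sqrt_mul_sqrt_sqrt (by norm_num : (0 : ℝ) ≤ 3)]
        have hpeak : b ^ 2 / (4 * a) = 4 * π * n / √3 := by
          rw [hb_def, ha_def, mul_pow, sq_sqrt hn0]
          field_simp
        rw [hpeak, ha_def, hb_def]
        field_simp
        ring
end

section
/- For every real number n ≥ 1, ∑_{l=1}^{∞} e^{4π√(nl) − √3·π·l} ≤ 3·√n · e^{4πn/√3}. -/
/-!
Completing the square, `exp (4π√(n x) - √3 π x) = exp (4πn/√3) * exp (-b (√x - c)²)` with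
`b = √3 π` and `c = 2√n/√3`. The second factor is unimodal in `x` with maximum `1` at `x = c²`, so
its values at the positive integers sum to at most `1 + ∫₀^∞`. The substitution `x = u²` turns
that integral into `∫ 2u exp (-b (u - c)²) du ≤ 1/b + 2c √(π/b)`, and
`1 + 1/b + 2c √(π/b) ≤ 3√n` once `n ≥ 1`.
-/

open Real Set Finset MeasureTheory

section Unimodal

variable {g : ℝ → ℝ} {p M : ℝ}

lemma min_le_of_unimodal (hmono : MonotoneOn g (Iic p)) (hanti : AntitoneOn g (Ici p))
    {a b x : ℝ} (hx : x ∈ Icc a b) : min (g a) (g b) ≤ g x := by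
  rcases le_total x p with hxp | hpx
  · exact (min_le_left _ _).trans (hmono (hx.1.trans hxp) hxp hx.1)
  · exact (min_le_right _ _).trans (hanti hpx (hpx.trans hx.2) hx.2)

lemma add_le_integral_of_unimodal (hg : Continuous g) (hmono : MonotoneOn g (Iic p))
    (hanti : AntitoneOn g (Ici p)) (hM : ∀ x, g x ≤ M) (a : ℝ) :
    g a + g (a + 1) ≤ M + ∫ x in a..a + 1, g x := by
  have hmin : min (g a) (g (a + 1)) ≤ ∫ x in a..a + 1, g x := by
    simpa using intervalIntegral.integral_mono_on (le_add_of_nonneg_right zero_le_one)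
      (intervalIntegrable_const (μ := volume))
      (hg.intervalIntegrable a (a + 1)) fun x hx => min_le_of_unimodal hmono hanti hx
  rw [← max_add_min]
  exact add_le_add (max_le (hM _) (hM _)) hmin

/-- Points left of `⌊p⌋` are compared with the integral to their right, points right of `⌊p⌋ + 1`
with the integral to their left; the two points around the peak cost `M` plus the integral between
them. -/
lemma sum_range_le_of_unimodal (hg : Continuous g) (hp : 0 ≤ p)
    (hmono : MonotoneOn g (Iic p)) (hanti : AntitoneOn g (Ici p)) (hM : ∀ x, g x ≤ M)
    {K : ℕ} (hK : ⌊p⌋₊ + 1 ≤ K) :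
    ∑ l ∈ range (K + 1), g l ≤ M + ∫ x in (0 : ℝ)..K, g x := by
  set N := ⌊p⌋₊
  obtain ⟨m, rfl⟩ := Nat.exists_eq_add_of_le hK
  have hNp : (N : ℝ) ≤ p := Nat.floor_le hp
  have hpN : p ≤ N + 1 := (Nat.lt_floor_add_one p).le
  have hlow : ∑ l ∈ range N, g l ≤ ∫ x in (0 : ℝ)..N, g x := by
    simpa using MonotoneOn.sum_le_integral (x₀ := 0) (a := N)
      (hmono.mono fun x hx => by simp at hx; exact hx.2.trans hNp)
  have hhigh :
      ∑ i ∈ range m, g ((N + 1 : ℝ) + (i + 1 : ℕ)) ≤ ∫ x in (N + 1 : ℝ)..N + 1 + m, g x :=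
    AntitoneOn.sum_le_integral (hanti.mono fun x hx => hpN.trans hx.1)
  have hpeak := add_le_integral_of_unimodal hg hmono hanti hM N
  have hsplit : ∫ x in (0 : ℝ)..N + 1 + m, g x = (∫ x in (0 : ℝ)..N, g x) +
      (∫ x in (N : ℝ)..N + 1, g x) + ∫ x in (N + 1 : ℝ)..N + 1 + m, g x := by
    simp only [intervalIntegral.integral_add_adjacent_intervals, hg.intervalIntegrable]
  have hshift : ∀ i : ℕ, ((N + 2 + i : ℕ) : ℝ) = (N + 1 : ℝ) + (i + 1 : ℕ) := fun i => by
    push_cast; ring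
  rw [show N + 1 + m + 1 = N + 2 + m by ring, sum_range_add, sum_range_succ, sum_range_succ]
  simp only [hshift]
  push_cast at hsplit hhigh ⊢
  linarith

lemma summable_and_tsum_le_of_unimodal (hg : Continuous g) (hg0 : ∀ x, 0 ≤ g x) (hp : 0 ≤ p)
    (hmono : MonotoneOn g (Iic p)) (hanti : AntitoneOn g (Ici p)) (hM : ∀ x, g x ≤ M) {I : ℝ}
    (hI : ∀ x, 0 ≤ x → ∫ t in (0 : ℝ)..x, g t ≤ I) :
    Summable (fun l : ℕ => g l) ∧ ∑' l : ℕ, g l ≤ M + I := by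
  have hpartial (K : ℕ) : ∑ l ∈ range K, g l ≤ M + I := by
    set K' := max K (⌊p⌋₊ + 1)
    calc ∑ l ∈ range K, g l ≤ ∑ l ∈ range (K' + 1), g l :=
          sum_le_sum_of_subset_of_nonneg (range_subset_range.2 (by omega)) fun _ _ _ => hg0 _
      _ ≤ M + ∫ x in (0 : ℝ)..K', g x :=
          sum_range_le_of_unimodal hg hp hmono hanti hM (le_max_right _ _)
      _ ≤ M + I := by grw [hI _ K'.cast_nonneg]
  exact ⟨summable_of_sum_range_le (fun l => hg0 l) hpartial,
    Real.tsum_le_of_sum_range_le (fun l => hg0 l) hpartial⟩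

end Unimodal

noncomputable def sqrtGaussian (b c x : ℝ) : ℝ := exp (-b * (√x - c) ^ 2)

section SqrtGaussian

variable {b c : ℝ}

lemma sqrtGaussian_nonneg (x : ℝ) : 0 ≤ sqrtGaussian b c x := (exp_pos _).le

lemma sqrtGaussian_le_one (hb : 0 ≤ b) (x : ℝ) : sqrtGaussian b c x ≤ 1 :=
  exp_le_one_iff.2 (by rw [neg_mul]; exact neg_nonpos.2 (by positivity))

lemma continuous_sqrtGaussian : Continuous (sqrtGaussian b c) := by
  unfold sqrtGaussian; fun_prop

lemma monotoneOn_sqrtGaussian (hb : 0 ≤ b) (hc : 0 ≤ c) :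
    MonotoneOn (sqrtGaussian b c) (Iic (c ^ 2)) := by
  intro x _ y hy hxy
  have hyc : √y ≤ c := by simpa [sqrt_sq hc] using sqrt_le_sqrt (show y ≤ c ^ 2 from hy)
  have hxy' : √x ≤ √y := sqrt_le_sqrt hxy
  unfold sqrtGaussian
  rw [exp_le_exp, neg_mul, neg_mul, neg_le_neg_iff]
  exact mul_le_mul_of_nonneg_left (by nlinarith [sqrt_nonneg x]) hb

lemma antitoneOn_sqrtGaussian (hb : 0 ≤ b) : AntitoneOn (sqrtGaussian b c) (Ici (c ^ 2)) := by
  intro x hx y _ hxy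
  have hcx : c ≤ √x := (le_abs_self c).trans <| by
    simpa [sqrt_sq_eq_abs] using sqrt_le_sqrt (show c ^ 2 ≤ x from hx)
  have hxy' : √x ≤ √y := sqrt_le_sqrt hxy
  unfold sqrtGaussian
  rw [exp_le_exp, neg_mul, neg_mul, neg_le_neg_iff]
  exact mul_le_mul_of_nonneg_left (by nlinarith) hb

lemma exp_eq_mul_sqrtGaussian (b c : ℝ) {x : ℝ} (hx : 0 ≤ x) :
    exp (2 * b * c * √x - b * x) = exp (b * c ^ 2) * sqrtGaussian b c x := by
  rw [sqrtGaussian, ← exp_add]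
  congr 1
  linear_combination b * sq_sqrt hx

lemma integral_sqrtGaussian_eq (b c : ℝ) {X : ℝ} (hX : 0 ≤ X) :
    ∫ x in (0 : ℝ)..X, sqrtGaussian b c x =
      ∫ u in (0 : ℝ)..√X, 2 * u * exp (-b * (u - c) ^ 2) := by
  have h := intervalIntegral.integral_deriv_smul_comp (f := fun u : ℝ => u ^ 2)
    (f' := fun u => 2 * u) (a := 0) (b := √X) (fun x _ => by simpa using hasDerivAt_pow 2 x)
    (by fun_prop) (continuous_sqrtGaussian (b := b) (c := c))
  simp only [smul_eq_mul, Function.comp_apply, sq_sqrt hX, ne_eq, OfNat.ofNat_ne_zero,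
    not_false_eq_true, zero_pow] at h
  rw [← h]
  refine intervalIntegral.integral_congr fun u hu => ?_
  rw [uIcc_of_le (sqrt_nonneg X)] at hu
  simp [sqrtGaussian, sqrt_sq hu.1]

lemma integral_two_mul_sub_mul_exp_le (hb : 0 < b) (c R : ℝ) :
    ∫ u in (0 : ℝ)..R, 2 * (u - c) * exp (-b * (u - c) ^ 2) ≤ 1 / b := by
  have hderiv (u : ℝ) : HasDerivAt (fun u => -exp (-b * (u - c) ^ 2) / b)
      (2 * (u - c) * exp (-b * (u - c) ^ 2)) u := by
    have hsq : HasDerivAt (fun u => -b * (u - c) ^ 2) (-b * (2 * (u - c))) u := by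
      simpa using (((hasDerivAt_id u).sub_const c).pow 2).const_mul (-b)
    refine (hsq.exp.neg.div_const b).congr_deriv ?_
    field_simp
  rw [intervalIntegral.integral_eq_sub_of_hasDerivAt (fun u _ => hderiv u)
    ((by fun_prop : Continuous _).intervalIntegrable _ _)]
  have h0 : exp (-b * (0 - c) ^ 2) ≤ 1 :=
    exp_le_one_iff.2 (by rw [neg_mul]; exact neg_nonpos.2 (by positivity))
  have hR : 0 < exp (-b * (R - c) ^ 2) := exp_pos _
  rw [div_sub_div_same, div_le_div_iff_of_pos_right hb]
  linarith

lemma integral_exp_neg_mul_sq_sub_le (hb : 0 < b) (c : ℝ) {R : ℝ} (hR : 0 ≤ R) :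
    ∫ u in (0 : ℝ)..R, exp (-b * (u - c) ^ 2) ≤ √(π / b) := by
  have hint : Integrable (fun u : ℝ => exp (-b * (u - c) ^ 2)) :=
    (integrable_exp_neg_mul_sq hb).comp_sub_right c
  calc ∫ u in (0 : ℝ)..R, exp (-b * (u - c) ^ 2)
      = ∫ u in Ioc 0 R, exp (-b * (u - c) ^ 2) := intervalIntegral.integral_of_le hR
    _ ≤ ∫ u, exp (-b * (u - c) ^ 2) :=
        setIntegral_le_integral hint (.of_forall fun _ => (exp_pos _).le)
    _ = √(π / b) := by
        rw [integral_sub_right_eq_self (fun u => exp (-b * u ^ 2)) c, integral_gaussian]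

lemma integral_sqrtGaussian_le (hb : 0 < b) (hc : 0 ≤ c) {X : ℝ} (hX : 0 ≤ X) :
    ∫ x in (0 : ℝ)..X, sqrtGaussian b c x ≤ 1 / b + 2 * c * √(π / b) := by
  have hsplit : ∫ u in (0 : ℝ)..√X, 2 * u * exp (-b * (u - c) ^ 2) =
      (∫ u in (0 : ℝ)..√X, 2 * (u - c) * exp (-b * (u - c) ^ 2)) +
        2 * c * ∫ u in (0 : ℝ)..√X, exp (-b * (u - c) ^ 2) := by
    rw [← intervalIntegral.integral_const_mul, ← intervalIntegral.integral_add
      ((by fun_prop : Continuous _).intervalIntegrable _ _)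
      ((by fun_prop : Continuous _).intervalIntegrable _ _)]
    congr 1 with u
    ring
  rw [integral_sqrtGaussian_eq b c hX, hsplit]
  gcongr
  · exact integral_two_mul_sub_mul_exp_le hb c _
  · exact integral_exp_neg_mul_sq_sub_le hb c (sqrt_nonneg X)

end SqrtGaussian

lemma exp_four_mul_pi_sqrt_mul_sub_eq {n x : ℝ} (hn : 0 ≤ n) (hx : 0 ≤ x) :
    exp (4 * π * √(n * x) - √3 * π * x) =
      exp (4 * π * n / √3) * sqrtGaussian (√3 * π) (2 * √n / √3) x := by
  have hpeak : √3 * π * (2 * √n / √3) ^ 2 = 4 * π * n / √3 := by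
    field_simp
    rw [sq_sqrt hn]
    ring
  rw [← hpeak, ← exp_eq_mul_sqrtGaussian _ _ hx, sqrt_mul hn]
  congr 2
  field_simp
  ring

-- `1/(√3 π) ≈ 0.184` and `2 · (2/√3) · 3^(-1/4) ≈ 1.755`.
lemma one_add_sqrtGaussian_bound_le {r : ℝ} (hr : 1 ≤ r) :
    1 + (1 / (√3 * π) + 2 * (2 * r / √3) * √(π / (√3 * π))) ≤ 3 * r := by
  set s := √3
  have hs2 : s ^ 2 = 3 := sq_sqrt (by norm_num)
  have hs : 1.732 ≤ s := by nlinarith [sqrt_nonneg 3]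
  have hq : √(π / (s * π)) ^ 2 * s = 1 := by
    rw [sq_sqrt (by positivity)]; field_simp
  have hq' : √(π / (s * π)) ≤ 0.76 := by nlinarith [sqrt_nonneg (π / (s * π))]
  have hπ : 3.14 ≤ π := pi_gt_d2.le
  have h1 : 1 / (s * π) ≤ 0.1839 := by
    rw [div_le_iff₀ (by positivity)]
    nlinarith [mul_nonneg (by linarith : (0:ℝ) ≤ s - 1.732) (by linarith : (0:ℝ) ≤ π - 3.14)]
  have h2 : 2 * (2 * r / s) * √(π / (s * π)) ≤ 1.7553 * r := by
    rw [show 2 * (2 * r / s) * √(π / (s * π)) = 4 * r * √(π / (s * π)) / s by ring,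
      div_le_iff₀ (by positivity)]
    nlinarith [mul_nonneg (by linarith : (0:ℝ) ≤ r) (by linarith : (0:ℝ) ≤ 0.76 - √(π / (s * π))),
      mul_nonneg (by linarith : (0:ℝ) ≤ r) (by linarith : (0:ℝ) ≤ s - 1.732)]
  linarith

theorem stmt3 (n : ℝ) (hn : 1 ≤ n) :
    Summable (fun l : ℕ =>
      Real.exp (4 * π * Real.sqrt (n * (l + 1)) - Real.sqrt 3 * π * (l + 1))) ∧
    ∑' l : ℕ, Real.exp (4 * π * Real.sqrt (n * (l + 1)) - Real.sqrt 3 * π * (l + 1)) ≤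
      3 * Real.sqrt n * Real.exp (4 * π * n / Real.sqrt 3) := by
  have hb : 0 < √3 * π := by positivity
  have hc : 0 ≤ 2 * √n / √3 := by positivity
  obtain ⟨hsum, htsum⟩ := summable_and_tsum_le_of_unimodal continuous_sqrtGaussian
    sqrtGaussian_nonneg (sq_nonneg _) (monotoneOn_sqrtGaussian hb.le hc)
    (antitoneOn_sqrtGaussian hb.le) (sqrtGaussian_le_one hb.le)
    (fun X hX => integral_sqrtGaussian_le hb hc hX)
  have hsum_succ := (summable_nat_add_iff 1).2 hsum
  rw [hsum.tsum_eq_zero_add] at htsum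
  push_cast at hsum_succ htsum
  have hterm (l : ℕ) :=
    exp_four_mul_pi_sqrt_mul_sub_eq (by linarith : 0 ≤ n) (by positivity : (0 : ℝ) ≤ l + 1)
  simp_rw [hterm, tsum_mul_left]
  refine ⟨hsum_succ.mul_left _, ?_⟩
  rw [mul_comm _ (exp _)]
  gcongr
  linarith [sqrtGaussian_nonneg (b := √3 * π) (c := 2 * √n / √3) 0,
    one_add_sqrtGaussian_bound_le (one_le_sqrt.2 hn)]
end

section
/- For every real number t ≥ √15 and all integers m ≥ 1 and k ≥ 1, 189 · m^{3/2+k} · (1 + k/(√3·π))^k · e^{4πm/√3} · e^{−tπ(m−1/2)} ≤ 610 · m^{1+2k} · (m + k/(√3·π))^k. -/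
open Real

lemma exp_c_le : Real.exp (1171531/1000000) ≤ 610/189 := by
  have hS : (2.2898 : ℝ) ≤ Real.exp (828469/1000000) := by
    have h := Real.sum_le_exp_of_nonneg (x := 828469/1000000) (by norm_num) 9
    refine le_trans ?_ h
    simp only [Finset.sum_range_succ, Finset.sum_range_zero]
    norm_num [Nat.factorial]
  have h2c : Real.exp (1171531/1000000 : ℝ) * Real.exp (828469/1000000 : ℝ)
      = Real.exp 1 * Real.exp 1 := by
    rw [← Real.exp_add, ← Real.exp_add]; norm_num
  have he1 : Real.exp 1 < 2.7182818286 := Real.exp_one_lt_d9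
  have hp1 := Real.exp_pos (1171531/1000000 : ℝ)
  have hp2 := Real.exp_pos (828469/1000000 : ℝ)
  nlinarith [mul_le_mul_of_nonneg_left hS hp1.le,
    mul_lt_mul_of_pos_left he1 (Real.exp_pos 1)]

theorem stmt7 (t : ℝ) (ht : Real.sqrt 15 ≤ t) (m k : ℕ) (hm : 1 ≤ m) (hk : 1 ≤ k) :
    189 * (m : ℝ) ^ ((3 : ℝ) / 2 + (k : ℝ)) * (1 + (k : ℝ) / (Real.sqrt 3 * π)) ^ k *
        Real.exp (4 * π * m / Real.sqrt 3) * Real.exp (-t * π * ((m : ℝ) - 1 / 2)) ≤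
      610 * (m : ℝ) ^ (1 + 2 * k) * ((m : ℝ) + (k : ℝ) / (Real.sqrt 3 * π)) ^ k := by
  have hm1 : (1 : ℝ) ≤ (m : ℝ) := by exact_mod_cast hm
  have hk1 : (1 : ℝ) ≤ (k : ℝ) := by exact_mod_cast hk
  have hpi := Real.pi_pos
  have hpiu : π < 3.141593 := Real.pi_lt_d6
  have hs3 : (1.7320508 : ℝ) ≤ Real.sqrt 3 := by
    nlinarith [Real.sq_sqrt (show (0:ℝ) ≤ 3 by norm_num), Real.sqrt_nonneg 3]
  have hs15 : (3.8729833 : ℝ) ≤ Real.sqrt 15 := by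
    nlinarith [Real.sq_sqrt (show (0:ℝ) ≤ 15 by norm_num), Real.sqrt_nonneg 15]
  have hs3pos : (0:ℝ) < Real.sqrt 3 := by linarith
  set x : ℝ := (m : ℝ) with hx
  -- bound the exponent
  have hE : 4 * π * x / Real.sqrt 3 + (-t * π * (x - 1/2)) ≤ 1171531/1000000 := by
    have hpx : (0:ℝ) < π * x := by positivity
    have h1 : 4 * π * x / Real.sqrt 3 ≤ 2.3094012 * π * x := by
      rw [div_le_iff₀ hs3pos]
      nlinarith [mul_le_mul_of_nonneg_left hs3 hpx.le]
    have h2 : -t * π * (x - 1/2) ≤ -3.8729833 * π * (x - 1/2) := by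
      nlinarith [mul_nonneg (show (0:ℝ) ≤ t - 3.8729833 by linarith)
        (mul_nonneg hpi.le (show (0:ℝ) ≤ x - 1/2 by linarith))]
    have h3 : 2.3094012 * π * x + (-3.8729833 * π * (x - 1/2)) ≤ 1171531/1000000 := by
      nlinarith [mul_le_mul_of_nonneg_left hm1 hpi.le]
    linarith
  have hexpE : Real.exp (4 * π * x / Real.sqrt 3) * Real.exp (-t * π * (x - 1/2))
      ≤ 610/189 := by
    rw [← Real.exp_add]
    exact le_trans (Real.exp_le_exp.2 hE) exp_c_le
  -- bound the powers
  have hq0 : (0:ℝ) ≤ (k : ℝ) / (Real.sqrt 3 * π) := by positivity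
  have hA : (x : ℝ) ^ ((3 : ℝ) / 2 + (k : ℝ)) ≤ x ^ (1 + 2 * k) := by
    have : (x : ℝ) ^ ((3 : ℝ) / 2 + (k : ℝ)) ≤ x ^ (((1 + 2 * k : ℕ) : ℝ)) := by
      apply Real.rpow_le_rpow_of_exponent_le hm1
      push_cast; linarith
    rwa [Real.rpow_natCast] at this
  have hB : (1 + (k : ℝ) / (Real.sqrt 3 * π)) ^ k ≤ (x + (k : ℝ) / (Real.sqrt 3 * π)) ^ k := by
    apply pow_le_pow_left₀ (by linarith) (by linarith)
  have hA0 : (0:ℝ) ≤ x ^ ((3 : ℝ) / 2 + (k : ℝ)) := Real.rpow_nonneg (by linarith) _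
  have hB0 : (0:ℝ) ≤ (1 + (k : ℝ) / (Real.sqrt 3 * π)) ^ k := by positivity
  calc 189 * x ^ ((3 : ℝ) / 2 + (k : ℝ)) * (1 + (k : ℝ) / (Real.sqrt 3 * π)) ^ k *
        Real.exp (4 * π * x / Real.sqrt 3) * Real.exp (-t * π * (x - 1/2))
      = 189 * x ^ ((3 : ℝ) / 2 + (k : ℝ)) * (1 + (k : ℝ) / (Real.sqrt 3 * π)) ^ k *
        (Real.exp (4 * π * x / Real.sqrt 3) * Real.exp (-t * π * (x - 1/2))) := by ring
    _ ≤ 189 * (x ^ (1 + 2 * k)) * ((x + (k : ℝ) / (Real.sqrt 3 * π)) ^ k) * (610/189) := by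
        gcongr
    _ = 610 * x ^ (1 + 2 * k) * (x + (k : ℝ) / (Real.sqrt 3 * π)) ^ k := by ring
end

section
/- For every real number t ≥ √15 and all integers m ≥ 1 and k ≥ 1, define B₀ := 2^{3+2k}·π^{2+2k}·m^{1+2k}·ζ(1+2k)/(1+2k)!, B₁ := 24π√(2π)·m^{3/2+k}·(1 + k/(√3·π))^k·e^{4πm/√3}, B₂ := 2^{4+2k}·π^{2+2k}·m^{1+2k}·ζ(1+2k)/(2k+1)! · (2k/(√3·π))^k · e^{−k/2} · e^{−√3·π/2}/(1 − e^{−√3·π/2}), B₃ := (m + k/(√3·π))^k · e^{tπ(m−1)}, and B₄ := (m + k/(√3·π))^k · e^{tπm/2}. Then (B₀ + B₁ + B₂ + B₃ + B₄) · e^{−tπ(m−1/2)} ≤ 615 · m^{1+2k} · (m + k/(√3·π))^k. -/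
/-!
Multiply every term by the decay factor `E = exp (-tπ(m - 1/2)) ≤ exp (-√15 π / 2) < 1/435`.
The dominant term is `B₁`: since `4/√3 < √15`, its growth `exp (4πm/√3)` is beaten by `E` up to a
factor `exp (π (4/√3 - √15/2)) < 3.228`, and `24π√(2π) · 3.228 < 610.1`. The other terms are at
most a few units of `m^(1+2k)` or `(m + k/(√3π))^k` once they are multiplied by `E`, using
`(2π)^(2k+1)/(2k+1)! ≤ 81.61`, `ζ(2k+1) ≤ 1 + 2^(1-2k) (ζ(2) - 1)` and
`(c k)^k/(2k+1)! ≤ 4.27` for `c ≤ 8.81`; the two factorial quotients decrease in `k` from some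
index on, so they are bounded by their first few values.
-/

open Real
open scoped Nat

lemma apply_le_of_antitone_from {α : Type*} [Preorder α] {a : ℕ → α} {N : ℕ} {C : α}
    (hinit : ∀ n ≤ N, a n ≤ C) (hstep : ∀ n ≥ N, a (n + 1) ≤ a n) (n : ℕ) : a n ≤ C :=
  (le_total n N).elim (hinit n) fun h =>
    (antitoneOn_nat_Ici_of_succ_le hstep (le_refl N) h h).trans (hinit N le_rfl)

section Factorial

lemma factorial_add_two_cast (n : ℕ) : ((n + 2)! : ℝ) = n ! * ((n + 1) * (n + 2)) := by
  push_cast [Nat.factorial_succ]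
  ring

lemma pow_div_factorial_add_two (x : ℝ) (n : ℕ) :
    x ^ (n + 2) / (n + 2)! = x ^ n / n ! * (x ^ 2 / ((n + 1) * (n + 2))) := by
  rw [factorial_add_two_cast, pow_add, mul_div_mul_comm]

lemma pow_odd_div_factorial_le (k : ℕ) :
    (6.283186 : ℝ) ^ (2 * k + 1) / (2 * k + 1)! ≤ 81.61 := by
  refine apply_le_of_antitone_from (a := fun k => (6.283186 : ℝ) ^ (2 * k + 1) / (2 * k + 1)!)
    (N := 2) (fun n hn => ?_) (fun n hn => ?_) k
  · interval_cases n <;> norm_num [Nat.factorial]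
  · have hn' : (2 : ℝ) ≤ n := by exact_mod_cast hn
    show _ ^ (2 * n + 1 + 2) / ((2 * n + 1 + 2)! : ℝ) ≤ _
    rw [pow_div_factorial_add_two]
    refine mul_le_of_le_one_right (by positivity) ((div_le_one (by positivity)).mpr ?_)
    push_cast
    nlinarith

lemma mul_succ_pow_succ (c : ℝ) {K : ℕ} (hK : K ≠ 0) :
    (c * (K + 1)) ^ (K + 1) = (c * K) ^ K * (1 + (K : ℝ)⁻¹) ^ K * (c * (K + 1)) := by
  rw [pow_succ, ← mul_pow, mul_one_add, mul_inv_cancel_right₀ (Nat.cast_ne_zero.mpr hK)]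
  ring

lemma linear_pow_div_factorial_le (k : ℕ) : ((8.81 : ℝ) * k) ^ k / (2 * k + 1)! ≤ 4.27 := by
  refine apply_le_of_antitone_from (a := fun k : ℕ => ((8.81 : ℝ) * k) ^ k / (2 * k + 1)!)
    (N := 5) (fun n hn => ?_) (fun n hn => ?_) k
  · interval_cases n <;> norm_num [Nat.factorial]
  · have hn' : (5 : ℝ) ≤ n := by exact_mod_cast hn
    show ((8.81 : ℝ) * ((n + 1 : ℕ) : ℝ)) ^ (n + 1) / ((2 * n + 1 + 2)! : ℝ) ≤ _
    -- by `(1 + 1/n)^n ≤ e`, consecutive terms have ratio at most `8.81 e (n+1) / ((2n+2)(2n+3))`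
    have hratio : (1 + (n : ℝ)⁻¹) ^ n * (8.81 * (n + 1)) ≤ (2 * n + 1 + 1) * (2 * n + 1 + 2) := by
      nlinarith [one_add_inv_pow_le_exp (n := n), exp_one_lt_d9]
    push_cast
    rw [mul_succ_pow_succ _ (by omega), factorial_add_two_cast, mul_assoc, mul_div_mul_comm]
    refine mul_le_of_le_one_right (by positivity) ((div_le_one (by positivity)).mpr ?_)
    push_cast
    linarith

end Factorial

section Zeta

lemma one_div_add_two_pow_le {s : ℕ} (hs : 2 ≤ s) {x : ℝ} (hx : 0 ≤ x) :
    1 / (x + 2) ^ s ≤ (1 / 2) ^ (s - 2) * (1 / (x + 2) ^ 2) :=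
  calc 1 / (x + 2) ^ s = (1 / (x + 2)) ^ (s - 2) * (1 / (x + 2) ^ 2) := by
        rw [← one_div_pow, ← one_div_pow, ← pow_add, Nat.sub_add_cancel hs]
    _ ≤ (1 / 2) ^ (s - 2) * (1 / (x + 2) ^ 2) := by gcongr; linarith

lemma tsum_one_div_succ_pow_le {s : ℕ} (hs : 2 ≤ s) :
    ∑' n : ℕ, 1 / ((n : ℝ) + 1) ^ s ≤ 1 + (1 / 2) ^ (s - 2) * (π ^ 2 / 6 - 1) := by
  have hζ₂ : HasSum (fun n : ℕ => 1 / ((n : ℝ) + 2) ^ 2) (π ^ 2 / 6 - 1) := by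
    simpa [Finset.sum_range_succ, add_assoc, one_add_one_eq_two] using
      (hasSum_nat_add_iff' 2).mpr hasSum_zeta_two
  have hsum₂ : Summable fun n : ℕ => 1 / ((n : ℝ) + 2) ^ s := by
    simpa [add_assoc, one_add_one_eq_two] using
      (summable_nat_add_iff 2).mpr (Real.summable_one_div_nat_pow.mpr hs)
  have hsum₁ : Summable fun n : ℕ => 1 / ((n : ℝ) + 1) ^ s := by
    simpa using (summable_nat_add_iff 1).mpr (Real.summable_one_div_nat_pow.mpr hs)
  have htail : ∑' n : ℕ, 1 / ((n : ℝ) + 2) ^ s ≤ (1 / 2) ^ (s - 2) * (π ^ 2 / 6 - 1) :=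
    hasSum_le (fun n => one_div_add_two_pow_le hs (Nat.cast_nonneg n)) hsum₂.hasSum
      (hζ₂.mul_left _)
  rw [hsum₁.tsum_eq_zero_add]
  push_cast
  simp only [add_assoc, one_add_one_eq_two]
  simpa using htail

lemma tsum_one_div_succ_pow_odd_le {k : ℕ} (hk : 1 ≤ k) :
    ∑' n : ℕ, 1 / ((n : ℝ) + 1) ^ (1 + 2 * k) ≤ 1.3225 := by
  have hhalf : (1 / 2 : ℝ) ^ (1 + 2 * k - 2) ≤ 1 / 2 :=
    pow_le_of_le_one (by norm_num) (by norm_num) (by omega)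
  have hζ₂ : π ^ 2 / 6 - 1 ≤ 0.645 := by nlinarith [pi_lt_d6, pi_pos]
  have hζ₂_nonneg : 0 ≤ π ^ 2 / 6 - 1 := by nlinarith [pi_gt_three]
  refine (tsum_one_div_succ_pow_le (by omega)).trans ?_
  nlinarith [mul_le_mul hhalf hζ₂ hζ₂_nonneg (by norm_num)]

end Zeta

section Numerics

lemma exp_neg_le_one_div_435 {x : ℝ} (hx : 6.0834 ≤ x) : exp (-x) ≤ 1 / 435 := by
  have h : 435 ≤ exp x :=
    calc (435 : ℝ) ≤ 2.7182818283 ^ 6 * (0.0834 + 1) := by norm_num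
      _ ≤ exp 1 ^ 6 * exp 0.0834 := by
          gcongr
          · exact exp_one_gt_d9.le
          · exact add_one_le_exp _
      _ ≤ exp x := by rw [← exp_nat_mul, ← exp_add]; exact exp_le_exp.mpr (by linarith)
  rw [exp_neg, one_div]
  exact inv_anti₀ (by norm_num) h

lemma le_mul_pi_div_two_of_sqrt_fifteen_le {t : ℝ} (ht : √15 ≤ t) : 6.0834 ≤ t * π / 2 := by
  have h15 : 3.8729833 ≤ √15 := le_sqrt_of_sq_le (by norm_num)
  nlinarith [pi_gt_d6]

lemma exp_decay_le {t m : ℝ} (ht : √15 ≤ t) (hm : 1 ≤ m) :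
    exp (-t * π * (m - 1 / 2)) ≤ 1 / 435 := by
  have htπ := le_mul_pi_div_two_of_sqrt_fifteen_le ht
  have hx : 6.0834 ≤ t * π * (m - 1 / 2) := by nlinarith
  rw [neg_mul, neg_mul]
  exact exp_neg_le_one_div_435 hx

lemma exp_growth_mul_exp_decay_le {t m : ℝ} (ht : √15 ≤ t) (hm : 1 ≤ m) :
    exp (4 * π * m / √3) * exp (-t * π * (m - 1 / 2)) ≤ 3.228 := by
  have h3 : 1.7320508 ≤ √3 := le_sqrt_of_sq_le (by norm_num)
  have h15 : 3.8729833 ≤ √15 := le_sqrt_of_sq_le (by norm_num)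
  have h4 : 4 / √3 ≤ 2.3094012 := by
    rw [div_le_iff₀ (by positivity)]
    nlinarith
  -- the bracket decreases in `m` because `4/√3 < √15 ≤ t`, so `m = 1` is the worst case
  have hbracket : 4 / √3 * m - t * (m - 1 / 2) ≤ 0.37291 := by
    nlinarith [mul_le_mul_of_nonneg_right h4 (by linarith : (0 : ℝ) ≤ m),
      mul_le_mul_of_nonneg_right (h15.trans ht) (by linarith : (0 : ℝ) ≤ m - 1 / 2)]
  have hexponent : 4 * π * m / √3 + -t * π * (m - 1 / 2) ≤ 1 + 0.1716 :=
    calc 4 * π * m / √3 + -t * π * (m - 1 / 2) = π * (4 / √3 * m - t * (m - 1 / 2)) := by ring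
      _ ≤ 3.141593 * 0.37291 := by nlinarith [pi_lt_d6, pi_pos]
      _ ≤ 1 + 0.1716 := by norm_num
  have hsmall : exp 0.1716 ≤ 1.18745 :=
    (Real.exp_bound' (by norm_num) (by norm_num) (n := 3) (by norm_num)).trans
      (by norm_num [Finset.sum_range_succ, Nat.factorial])
  calc exp (4 * π * m / √3) * exp (-t * π * (m - 1 / 2)) ≤ exp 1 * exp 0.1716 := by
        rw [← exp_add, ← exp_add]
        exact exp_le_exp.mpr hexponent
    _ ≤ 2.7182818286 * 1.18745 := by gcongr; exact exp_one_lt_d9.le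
    _ ≤ 3.228 := by norm_num

lemma exp_mul_exp_decay_le {t : ℝ} (ht : √15 ≤ t) (m : ℝ) :
    exp (t * π * (m - 1)) * exp (-t * π * (m - 1 / 2)) ≤ 1 / 435 := by
  rw [← exp_add, show t * π * (m - 1) + -t * π * (m - 1 / 2) = -(t * π / 2) by ring]
  exact exp_neg_le_one_div_435 (le_mul_pi_div_two_of_sqrt_fifteen_le ht)

lemma exp_half_mul_exp_decay_le_one {t m : ℝ} (ht : 0 ≤ t) (hm : 1 ≤ m) :
    exp (t * π * m / 2) * exp (-t * π * (m - 1 / 2)) ≤ 1 := by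
  rw [← exp_add, exp_le_one_iff]
  nlinarith [mul_nonneg (mul_nonneg ht pi_pos.le) (sub_nonneg.mpr hm)]

lemma exp_neg_sqrt_three_pi_div_two_ratio_le :
    exp (-√3 * π / 2) / (1 - exp (-√3 * π / 2)) ≤ 0.0707 := by
  have h3 : 1.7320508 ≤ √3 := le_sqrt_of_sq_le (by norm_num)
  have hexp : 15.17 ≤ exp (√3 * π / 2) :=
    calc (15.17 : ℝ) ≤ ∑ i ∈ Finset.range 14, (2.7206 : ℝ) ^ i / i ! := by
          norm_num [Finset.sum_range_succ, Nat.factorial]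
      _ ≤ exp 2.7206 := sum_le_exp_of_nonneg (by norm_num) _
      _ ≤ exp (√3 * π / 2) := exp_le_exp.mpr (by nlinarith [pi_gt_d6])
  have hx : exp (-√3 * π / 2) ≤ 1 / 15.17 := by
    rw [neg_mul, neg_div, exp_neg, one_div]
    exact inv_anti₀ (by norm_num) hexp
  calc exp (-√3 * π / 2) / (1 - exp (-√3 * π / 2)) ≤ (1 / 15.17) / (1 - 1 / 15.17) := by
        gcongr
    _ ≤ 0.0707 := by norm_num

lemma eight_pi_exp_neg_half_div_sqrt_three_le : 8 * π * exp (-1 / 2) / √3 ≤ 8.81 := by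
  have h3 : 1.7320508 ≤ √3 := le_sqrt_of_sq_le (by norm_num)
  have hexp : 1.64869 ≤ exp (1 / 2) :=
    (by norm_num [Finset.sum_range_succ, Nat.factorial] :
      (1.64869 : ℝ) ≤ ∑ i ∈ Finset.range 6, (1 / 2 : ℝ) ^ i / i !).trans
      (sum_le_exp_of_nonneg (by norm_num) _)
  have h : exp (-1 / 2) ≤ 0.60655 := by
    rw [neg_div, exp_neg]
    exact (inv_anti₀ (by norm_num) hexp).trans (by norm_num)
  rw [div_le_iff₀ (by positivity)]
  nlinarith [pi_lt_d6, pi_pos, exp_pos (-1 / 2)]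

end Numerics

lemma two_pow_mul_pi_pow_mul_div_pow_mul_exp (k : ℕ) :
    2 ^ (4 + 2 * k) * π ^ (2 + 2 * k) * (2 * k / (√3 * π)) ^ k * exp (-(k : ℝ) / 2) =
      16 * π ^ 2 * (8 * π * exp (-1 / 2) / √3 * k) ^ k := by
  have h3 : √3 ≠ 0 := by positivity
  have hπ : π ≠ 0 := pi_ne_zero
  rw [show -(k : ℝ) / 2 = k * (-1 / 2) by ring, exp_nat_mul, show (8 : ℝ) = 2 ^ 3 by norm_num]
  simp only [div_pow, mul_pow, ← pow_mul]
  field_simp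
  ring

section Terms

variable {t : ℝ} {k : ℕ}

lemma zeta_term_le (m : ℕ) (hk : 1 ≤ k) :
    2 ^ (3 + 2 * k) * π ^ (2 + 2 * k) * (m : ℝ) ^ (1 + 2 * k) *
        (∑' n : ℕ, 1 / ((n : ℝ) + 1) ^ (1 + 2 * k)) / (1 + 2 * k)! ≤
      1357 * (m : ℝ) ^ (1 + 2 * k) := by
  set Z := ∑' n : ℕ, 1 / ((n : ℝ) + 1) ^ (1 + 2 * k)
  have hZ0 : 0 ≤ Z := tsum_nonneg fun n => by positivity
  have hW : (2 * π) ^ (2 * k + 1) / (2 * k + 1)! ≤ 81.61 :=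
    (div_le_div_of_nonneg_right (pow_le_pow_left₀ (by positivity) (by linarith [pi_lt_d6]) _)
      (by positivity)).trans (pow_odd_div_factorial_le k)
  have hfac : ((1 + 2 * k)! : ℝ) = (2 * k + 1)! := by rw [add_comm]
  calc _ = 4 * π * ((2 * π) ^ (2 * k + 1) / (2 * k + 1)!) * Z * (m : ℝ) ^ (1 + 2 * k) := by
        rw [hfac]; ring
    _ ≤ 4 * 3.141593 * 81.61 * 1.3225 * (m : ℝ) ^ (1 + 2 * k) := by
        gcongr
        · exact pi_lt_d6.le
        · exact tsum_one_div_succ_pow_odd_le hk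
    _ ≤ 1357 * (m : ℝ) ^ (1 + 2 * k) := by gcongr; norm_num

lemma growth_term_mul_exp_decay_le {m : ℕ} (ht : √15 ≤ t) (hm : 1 ≤ m) (hk : 1 ≤ k) :
    24 * π * √(2 * π) * (m : ℝ) ^ ((3 : ℝ) / 2 + (k : ℝ)) * (1 + (k : ℝ) / (√3 * π)) ^ k *
        exp (4 * π * m / √3) * exp (-t * π * ((m : ℝ) - 1 / 2)) ≤
      610.1 * ((m : ℝ) ^ (1 + 2 * k) * ((m : ℝ) + k / (√3 * π)) ^ k) := by
  have hm' : (1 : ℝ) ≤ m := by exact_mod_cast hm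
  have hk' : (1 : ℝ) ≤ k := by exact_mod_cast hk
  have hconst : 24 * π * √(2 * π) ≤ 188.996 := by
    have hsqrt : √(2 * π) ≤ 2.5066286 :=
      sqrt_le_iff.mpr ⟨by norm_num, by nlinarith [pi_lt_d6]⟩
    nlinarith [pi_lt_d6, pi_pos, sqrt_nonneg (2 * π)]
  have hpow : (m : ℝ) ^ ((3 : ℝ) / 2 + (k : ℝ)) ≤ (m : ℝ) ^ (1 + 2 * k) := by
    rw [← rpow_natCast]
    exact rpow_le_rpow_of_exponent_le hm' (by push_cast; linarith)
  have hbase : (1 + (k : ℝ) / (√3 * π)) ^ k ≤ ((m : ℝ) + k / (√3 * π)) ^ k := by gcongr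
  calc _ = 24 * π * √(2 * π) * (m : ℝ) ^ ((3 : ℝ) / 2 + (k : ℝ)) *
          (1 + (k : ℝ) / (√3 * π)) ^ k *
          (exp (4 * π * m / √3) * exp (-t * π * ((m : ℝ) - 1 / 2))) := by ring
    _ ≤ 188.996 * (m : ℝ) ^ (1 + 2 * k) * ((m : ℝ) + k / (√3 * π)) ^ k * 3.228 := by
        gcongr
        exact exp_growth_mul_exp_decay_le ht hm'
    _ ≤ 610.1 * ((m : ℝ) ^ (1 + 2 * k) * ((m : ℝ) + k / (√3 * π)) ^ k) := by
        nlinarith [mul_nonneg (by positivity : (0 : ℝ) ≤ (m : ℝ) ^ (1 + 2 * k))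
          (by positivity : (0 : ℝ) ≤ ((m : ℝ) + k / (√3 * π)) ^ k)]

lemma damped_zeta_term_le (m : ℕ) (hk : 1 ≤ k) :
    2 ^ (4 + 2 * k) * π ^ (2 + 2 * k) * (m : ℝ) ^ (1 + 2 * k) *
        (∑' n : ℕ, 1 / ((n : ℝ) + 1) ^ (1 + 2 * k)) / (2 * k + 1)! *
        (2 * k / (√3 * π)) ^ k * exp (-(k : ℝ) / 2) *
        (exp (-√3 * π / 2) / (1 - exp (-√3 * π / 2))) ≤
      66 * (m : ℝ) ^ (1 + 2 * k) := by
  set Z := ∑' n : ℕ, 1 / ((n : ℝ) + 1) ^ (1 + 2 * k)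
  set R := exp (-√3 * π / 2) / (1 - exp (-√3 * π / 2))
  set c := 8 * π * exp (-1 / 2) / √3
  have hZ0 : 0 ≤ Z := tsum_nonneg fun n => by positivity
  have hR0 : 0 ≤ R := by
    refine div_nonneg (exp_pos _).le (sub_nonneg.mpr (exp_le_one_iff.mpr ?_))
    have := sqrt_nonneg 3
    nlinarith [pi_pos]
  have hV : (c * k) ^ k / (2 * k + 1)! ≤ 4.27 :=
    (div_le_div_of_nonneg_right (pow_le_pow_left₀ (by positivity)
      (mul_le_mul_of_nonneg_right eight_pi_exp_neg_half_div_sqrt_three_le k.cast_nonneg) _)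
      (by positivity)).trans (linear_pow_div_factorial_le k)
  calc _ = 2 ^ (4 + 2 * k) * π ^ (2 + 2 * k) * (2 * k / (√3 * π)) ^ k * exp (-(k : ℝ) / 2) *
          (m : ℝ) ^ (1 + 2 * k) * Z * R / (2 * k + 1)! := by ring
    _ = 16 * π ^ 2 * (m : ℝ) ^ (1 + 2 * k) * Z * R * ((c * k) ^ k / (2 * k + 1)!) := by
        rw [two_pow_mul_pi_pow_mul_div_pow_mul_exp]; ring
    _ ≤ 16 * 3.141593 ^ 2 * (m : ℝ) ^ (1 + 2 * k) * 1.3225 * 0.0707 * 4.27 := by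
        gcongr
        · exact pi_lt_d6.le
        · exact tsum_one_div_succ_pow_odd_le hk
        · exact exp_neg_sqrt_three_pi_div_two_ratio_le
    _ ≤ 66 * (m : ℝ) ^ (1 + 2 * k) := by
        have : (0 : ℝ) ≤ (m : ℝ) ^ (1 + 2 * k) := by positivity
        linarith

end Terms

theorem stmt8 (t : ℝ) (ht : Real.sqrt 15 ≤ t) (m k : ℕ) (hm : 1 ≤ m) (hk : 1 ≤ k)
    (B₀ B₁ B₂ B₃ B₄ : ℝ)
    (hB₀ : B₀ = 2 ^ (3 + 2 * k) * π ^ (2 + 2 * k) * (m : ℝ) ^ (1 + 2 * k) *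
      (∑' n : ℕ, 1 / ((n : ℝ) + 1) ^ (1 + 2 * k)) / (Nat.factorial (1 + 2 * k)))
    (hB₁ : B₁ = 24 * π * Real.sqrt (2 * π) * (m : ℝ) ^ ((3 : ℝ) / 2 + (k : ℝ)) *
      (1 + (k : ℝ) / (Real.sqrt 3 * π)) ^ k * Real.exp (4 * π * m / Real.sqrt 3))
    (hB₂ : B₂ = 2 ^ (4 + 2 * k) * π ^ (2 + 2 * k) * (m : ℝ) ^ (1 + 2 * k) *
      (∑' n : ℕ, 1 / ((n : ℝ) + 1) ^ (1 + 2 * k)) / (Nat.factorial (2 * k + 1)) *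
      (2 * k / (Real.sqrt 3 * π)) ^ k * Real.exp (-(k : ℝ) / 2) *
      (Real.exp (-(Real.sqrt 3) * π / 2) / (1 - Real.exp (-(Real.sqrt 3) * π / 2))))
    (hB₃ : B₃ = ((m : ℝ) + (k : ℝ) / (Real.sqrt 3 * π)) ^ k * Real.exp (t * π * ((m : ℝ) - 1)))
    (hB₄ : B₄ = ((m : ℝ) + (k : ℝ) / (Real.sqrt 3 * π)) ^ k * Real.exp (t * π * m / 2)) :
    (B₀ + B₁ + B₂ + B₃ + B₄) * Real.exp (-t * π * ((m : ℝ) - 1 / 2)) ≤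
      615 * (m : ℝ) ^ (1 + 2 * k) * ((m : ℝ) + (k : ℝ) / (Real.sqrt 3 * π)) ^ k := by
  have hm' : (1 : ℝ) ≤ m := by exact_mod_cast hm
  set P := (m : ℝ) ^ (1 + 2 * k)
  set Q := ((m : ℝ) + (k : ℝ) / (√3 * π)) ^ k
  set E := exp (-t * π * ((m : ℝ) - 1 / 2))
  have hE := exp_decay_le ht hm'
  have hP : 1 ≤ P := one_le_pow₀ hm'
  have hQ : 1 ≤ Q := one_le_pow₀ (le_add_of_le_of_nonneg hm' (by positivity))
  have h₀ : B₀ * E ≤ 1357 * P * (1 / 435) :=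
    hB₀ ▸ mul_le_mul (zeta_term_le m hk) hE (exp_pos _).le (by positivity)
  have h₁ : B₁ * E ≤ 610.1 * (P * Q) := hB₁ ▸ growth_term_mul_exp_decay_le ht hm hk
  have h₂ : B₂ * E ≤ 66 * P * (1 / 435) :=
    hB₂ ▸ mul_le_mul (damped_zeta_term_le m hk) hE (exp_pos _).le (by positivity)
  have h₃ : B₃ * E ≤ Q * (1 / 435) := by
    rw [hB₃, mul_assoc]
    exact mul_le_mul_of_nonneg_left (exp_mul_exp_decay_le ht m) (by positivity)
  have h₄ : B₄ * E ≤ Q * 1 := by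
    rw [hB₄, mul_assoc]
    exact mul_le_mul_of_nonneg_left
      (exp_half_mul_exp_decay_le_one ((sqrt_nonneg 15).trans ht) hm') (by positivity)
  nlinarith [mul_nonneg (zero_le_one.trans hP) (sub_nonneg.mpr hQ),
    mul_nonneg (zero_le_one.trans hQ) (sub_nonneg.mpr hP)]
end

section
/- For all integers k ≥ 1, m ≥ 1 and every real number T > 0, |∑_{r=0}^{k} C(k,r) · (−2k+r)_{k−r} · m^r / (2Tπ)^{k−r}| ≥ 2m^k − (m + k/(Tπ))^k, where C(k,r) is the binomial coefficient. -/
/-! The summand with `r = k` is `m ^ k`. For `r < k` the Pochhammer factor is a product of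
`k - r` integers in `[-2k, -k-1]`, hence at most `(2k) ^ (k - r)` in absolute value, so the
remaining summands add up to at most `(m + k/(Tπ)) ^ k - m ^ k` in absolute value, by the binomial
theorem. The reverse triangle inequality finishes the proof. -/

open Real Polynomial Finset

lemma ascPochhammer_eval_eq_prod_range {R : Type*} [CommSemiring R] (n : ℕ) (x : R) :
    (ascPochhammer R n).eval x = ∏ i ∈ range n, (x + i) := by
  induction n with
  | zero => simp
  | succ n ih => simp [ascPochhammer_succ_right, prod_range_succ, ih]

/-- The factors `x, x + 1, …, x + n - 1` all lie in `[x, 0]`. -/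
lemma abs_ascPochhammer_eval_le_of_add_le_one {x : ℝ} {n : ℕ} (h : x + n ≤ 1) :
    |(ascPochhammer ℝ n).eval x| ≤ |x| ^ n := by
  rw [ascPochhammer_eval_eq_prod_range, abs_prod]
  refine (prod_le_prod (fun i _ ↦ abs_nonneg _) fun i hi ↦ ?_).trans_eq
    (pow_eq_prod_const _ _).symm
  have hi : (i : ℝ) + 1 ≤ n := by exact_mod_cast mem_range.mp hi
  rw [abs_le]
  constructor <;> linarith [neg_abs_le x, abs_nonneg x, (Nat.cast_nonneg i : (0 : ℝ) ≤ i)]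

lemma abs_sum_range_succ_ge_of_abs_le_binomial {a c : ℝ} {k : ℕ} (t : ℕ → ℝ)
    (htop : t k = a ^ k) (hbound : ∀ r < k, |t r| ≤ k.choose r * a ^ r * c ^ (k - r)) :
    2 * a ^ k - (a + c) ^ k ≤ |∑ r ∈ range (k + 1), t r| := by
  have hS : |∑ r ∈ range k, t r| ≤ (a + c) ^ k - a ^ k := by
    have hbin : (a + c) ^ k = ∑ r ∈ range k, k.choose r * a ^ r * c ^ (k - r) + a ^ k := by
      rw [add_pow, sum_range_succ, Nat.sub_self, Nat.choose_self]
      simp only [pow_zero, Nat.cast_one, mul_one]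
      exact congrArg₂ _ (sum_congr rfl fun r _ ↦ by ring) rfl
    rw [hbin, add_sub_cancel_right]
    exact (abs_sum_le_sum_abs _ _).trans (sum_le_sum fun r hr ↦ hbound r (mem_range.mp hr))
  rw [sum_range_succ, htop]
  linarith [le_abs_self (∑ r ∈ range k, t r + a ^ k), neg_abs_le (∑ r ∈ range k, t r)]

lemma abs_choose_mul_ascPochhammer_div_le {k r : ℕ} (hr : r ≤ k) {a d : ℝ} (ha : 0 ≤ a)
    (hd : 0 < d) :
    |(k.choose r : ℝ) * (ascPochhammer ℝ (k - r)).eval (-2 * (k : ℝ) + r) * a ^ r /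
        d ^ (k - r)| ≤ k.choose r * a ^ r * (2 * k / d) ^ (k - r) := by
  have hpoch : |(ascPochhammer ℝ (k - r)).eval (-2 * (k : ℝ) + r)| ≤ (2 * k) ^ (k - r) := by
    refine (abs_ascPochhammer_eval_le_of_add_le_one ?_).trans
      (pow_le_pow_left₀ (abs_nonneg _) ?_ _)
    · push_cast [hr]; linarith [(Nat.cast_nonneg k : (0 : ℝ) ≤ k)]
    · have : (r : ℝ) ≤ k := by exact_mod_cast hr
      rw [abs_le]; constructor <;> linarith [(Nat.cast_nonneg r : (0 : ℝ) ≤ r)]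
  rw [abs_div, abs_mul, abs_mul, Nat.abs_cast, abs_pow, abs_of_nonneg ha,
    abs_of_pos (pow_pos hd _), div_pow, mul_div_assoc', mul_right_comm]
  gcongr

theorem stmt9_general (k m : ℕ) (T : ℝ) (hT : 0 < T) :
    2 * (m : ℝ) ^ k - ((m : ℝ) + (k : ℝ) / (T * π)) ^ k ≤
      |∑ r ∈ Finset.range (k + 1), (k.choose r : ℝ) *
        (ascPochhammer ℝ (k - r)).eval (-2 * (k : ℝ) + (r : ℝ)) * (m : ℝ) ^ r /
          (2 * T * π) ^ (k - r)| := by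
  have hc : (k : ℝ) / (T * π) = 2 * k / (2 * T * π) := by
    rw [mul_assoc 2 T π, mul_div_mul_left _ _ two_ne_zero]
  rw [hc]
  refine abs_sum_range_succ_ge_of_abs_le_binomial _ (by simp) fun r hr ↦ ?_
  exact abs_choose_mul_ascPochhammer_div_le hr.le (Nat.cast_nonneg m) (by positivity)

theorem stmt9 (k m : ℕ) (hk : 1 ≤ k) (hm : 1 ≤ m) (T : ℝ) (hT : 0 < T) :
    2 * (m : ℝ) ^ k - ((m : ℝ) + (k : ℝ) / (T * π)) ^ k ≤
      |∑ r ∈ Finset.range (k + 1), (k.choose r : ℝ) *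
        (ascPochhammer ℝ (k - r)).eval (-2 * (k : ℝ) + (r : ℝ)) * (m : ℝ) ^ r /
          (2 * T * π) ^ (k - r)| :=
  stmt9_general k m T hT
end

section
/- Let k ≥ 1 and m ≥ 2 be integers, let τ ∈ ℂ with v := Im τ ≥ √3/2, and let a₁, …, a_{m−1} be complex numbers. Then |∑_{r=0}^{k} (−1)^{k−r} · C(k,r) · ((−2k+r)_{k−r} / (4πv)^{k−r}) · ∑_{n=1}^{m−1} (−n)^r · a_n · e^{−2πinτ}| ≤ (m + k/(√3·π))^k · e^{2π(m−1)v} · ∑_{n=1}^{m−1} |a_n|, where C(k,r) is the binomial coefficient. -/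
/-!
Bound each Pochhammer symbol `(-2k+r)_{k-r}` by `(2k)^{k-r}` (all its factors lie in `[-2k, 0]`),
each `|n^r e^{-2πinτ}|` by `m^r e^{2π(m-1)v}`, and recombine the resulting majorants
`C(k,r) m^r (k/(2πv))^{k-r}` by the binomial theorem into `(m + k/(2πv))^k`;
finally `2v ≥ √3` gives `k/(2πv) ≤ k/(√3π)`.
-/

open Real Polynomial Finset

lemma norm_ascPochhammer_eval_le {R : Type*} [NormedRing R] [NormOneClass R] {M : ℝ}
    (j : ℕ) (x : R) (h : ∀ i < j, ‖x + i‖ ≤ M) : ‖(ascPochhammer R j).eval x‖ ≤ M ^ j := by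
  induction j with
  | zero => simp
  | succ j ih =>
    have hM : 0 ≤ M := (norm_nonneg _).trans (h j j.lt_succ_self)
    rw [ascPochhammer_succ_eval, pow_succ]
    exact (norm_mul_le _ _).trans <| mul_le_mul (ih fun i hi => h i (hi.trans j.lt_succ_self))
      (h j j.lt_succ_self) (norm_nonneg _) (pow_nonneg hM j)

lemma norm_ascPochhammer_eval_neg_two_mul_add_le {k r : ℕ} (hr : r ≤ k) :
    ‖(ascPochhammer ℂ (k - r)).eval (-2 * (k : ℂ) + r)‖ ≤ (2 * k) ^ (k - r) := by
  refine norm_ascPochhammer_eval_le _ _ fun i hi => ?_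
  have hri : (r : ℝ) + i ≤ k := by exact_mod_cast (by omega : r + i ≤ k)
  have hreal : -2 * (k : ℂ) + r + i = ((-2 * k + r + i : ℝ) : ℂ) := by push_cast; ring
  rw [hreal, Complex.norm_real, Real.norm_eq_abs, abs_le]
  constructor <;> linarith [(by positivity : (0 : ℝ) ≤ r + i)]

lemma norm_exp_neg_two_pi_I_mul (x : ℝ) (τ : ℂ) :
    ‖Complex.exp (-2 * (π : ℂ) * Complex.I * x * τ)‖ = Real.exp (2 * π * x * τ.im) := by
  rw [Complex.norm_exp]
  congr 1
  simp [Complex.mul_re, Complex.mul_im]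

lemma norm_sum_mul_le_of_norm_le {ι 𝕜 : Type*} [NormedDivisionRing 𝕜] {s : Finset ι}
    {f g : ι → 𝕜} {C : ℝ} (h : ∀ i ∈ s, ‖f i‖ ≤ C) :
    ‖∑ i ∈ s, f i * g i‖ ≤ C * ∑ i ∈ s, ‖g i‖ := by
  rw [mul_sum]
  refine norm_sum_le_of_le _ fun i hi => ?_
  rw [norm_mul]
  exact mul_le_mul_of_nonneg_right (h i hi) (norm_nonneg _)

lemma norm_sum_neg_pow_mul_exp_le (m r : ℕ) {τ : ℂ} (hτ : 0 ≤ τ.im) (a : ℕ → ℂ) :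
    ‖∑ n ∈ Icc 1 (m - 1),
        (-(n : ℂ)) ^ r * a n * Complex.exp (-2 * (π : ℂ) * Complex.I * (n : ℂ) * τ)‖ ≤
      (m : ℝ) ^ r * Real.exp (2 * π * ((m : ℝ) - 1) * τ.im) * ∑ n ∈ Icc 1 (m - 1), ‖a n‖ := by
  simp_rw [mul_right_comm _ (a _)]
  refine norm_sum_mul_le_of_norm_le fun n hn => ?_
  obtain ⟨hn1, hnm⟩ := mem_Icc.mp hn
  have hnm_real : (n : ℝ) ≤ m - 1 := by
    rw [le_sub_iff_add_le]; exact_mod_cast (by omega : n + 1 ≤ m)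
  rw [norm_mul, norm_pow, norm_neg, Complex.norm_natCast, ← Complex.ofReal_natCast n,
    norm_exp_neg_two_pi_I_mul]
  gcongr
  omega

lemma norm_binomial_pochhammer_coeff_le {k r : ℕ} (hr : r ≤ k) {v : ℝ} (hv : 0 < v) :
    ‖(-1 : ℂ) ^ (k - r) * (k.choose r : ℂ) *
        ((ascPochhammer ℂ (k - r)).eval (-2 * (k : ℂ) + (r : ℂ)) /
          (4 * (π : ℂ) * (v : ℂ)) ^ (k - r))‖ ≤ k.choose r * (k / (2 * π * v)) ^ (k - r) := by
  have hden : ‖4 * (π : ℂ) * (v : ℂ)‖ = 4 * π * v := by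
    rw [show 4 * (π : ℂ) * (v : ℂ) = ((4 * π * v : ℝ) : ℂ) by push_cast; ring, Complex.norm_real,
      Real.norm_of_nonneg (by positivity)]
  rw [norm_mul, norm_mul, norm_div, norm_pow, norm_pow, hden, norm_neg, norm_one, one_pow, one_mul,
    Complex.norm_natCast, show (k : ℝ) / (2 * π * v) = 2 * k / (4 * π * v) by field_simp; ring,
    div_pow]
  gcongr
  exact norm_ascPochhammer_eval_neg_two_mul_add_le hr

theorem stmt14_general (k m : ℕ) (τ : ℂ)
    (hτ : Real.sqrt 3 / 2 ≤ τ.im) (a : ℕ → ℂ) :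
    ‖∑ r ∈ Finset.range (k + 1),
        (-1 : ℂ) ^ (k - r) * (k.choose r : ℂ) *
          ((ascPochhammer ℂ (k - r)).eval (-2 * (k : ℂ) + (r : ℂ)) /
            (4 * (π : ℂ) * (τ.im : ℂ)) ^ (k - r)) *
          ∑ n ∈ Finset.Icc 1 (m - 1),
            (-(n : ℂ)) ^ r * a n * Complex.exp (-2 * (π : ℂ) * Complex.I * (n : ℂ) * τ)‖ ≤
      ((m : ℝ) + (k : ℝ) / (Real.sqrt 3 * π)) ^ k * Real.exp (2 * π * ((m : ℝ) - 1) * τ.im) *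
        ∑ n ∈ Finset.Icc 1 (m - 1), ‖a n‖ := by
  have hv : 0 < τ.im := lt_of_lt_of_le (by positivity) hτ
  set E := Real.exp (2 * π * ((m : ℝ) - 1) * τ.im)
  set A := ∑ n ∈ Icc 1 (m - 1), ‖a n‖
  have hq : (k : ℝ) / (2 * π * τ.im) ≤ k / (√3 * π) := by
    apply div_le_div_of_nonneg_left (Nat.cast_nonneg k) (by positivity)
    nlinarith [Real.pi_pos]
  calc _ ≤ ∑ r ∈ range (k + 1),
          (m : ℝ) ^ r * (k / (2 * π * τ.im)) ^ (k - r) * k.choose r * (E * A) := by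
        refine norm_sum_le_of_le _ fun r hr => (norm_mul_le _ _).trans ?_
        have hrk : r ≤ k := Nat.lt_succ_iff.mp (mem_range.mp hr)
        calc _ ≤ (k.choose r * (k / (2 * π * τ.im)) ^ (k - r)) * ((m : ℝ) ^ r * E * A) :=
              mul_le_mul (norm_binomial_pochhammer_coeff_le hrk hv)
                (norm_sum_neg_pow_mul_exp_le m r hv.le a) (norm_nonneg _) (by positivity)
          _ = _ := by ring
    _ = ((m : ℝ) + k / (2 * π * τ.im)) ^ k * (E * A) := by rw [← sum_mul, add_pow]
    _ ≤ ((m : ℝ) + k / (√3 * π)) ^ k * (E * A) := by gcongr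
    _ = _ := by ring

theorem stmt14 (k m : ℕ) (hk : 1 ≤ k) (hm : 2 ≤ m) (τ : ℂ)
    (hτ : Real.sqrt 3 / 2 ≤ τ.im) (a : ℕ → ℂ) :
    ‖∑ r ∈ Finset.range (k + 1),
        (-1 : ℂ) ^ (k - r) * (k.choose r : ℂ) *
          ((ascPochhammer ℂ (k - r)).eval (-2 * (k : ℂ) + (r : ℂ)) /
            (4 * (π : ℂ) * (τ.im : ℂ)) ^ (k - r)) *
          ∑ n ∈ Finset.Icc 1 (m - 1),
            (-(n : ℂ)) ^ r * a n * Complex.exp (-2 * (π : ℂ) * Complex.I * (n : ℂ) * τ)‖ ≤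
      ((m : ℝ) + (k : ℝ) / (Real.sqrt 3 * π)) ^ k * Real.exp (2 * π * ((m : ℝ) - 1) * τ.im) *
        ∑ n ∈ Finset.Icc 1 (m - 1), ‖a n‖ :=
  stmt14_general k m τ hτ a
end
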